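/- arXiv:1907.07334 — 7 statements merged into one kernel-verified Lean document; each statement's English description precedes it below -/
import Mathlib

section
/- For every integer ℓ ≥ 1 and all real numbers x and y, one has y·Σ_{h=1}^{ℓ} N(ℓ,h)·(x·y)^h·(1+y)^{2ℓ−h} = x·y²·(1+y)·Σ_{p=0}^{⌊(ℓ−1)/2⌋} M(ℓ−1,p)·(x·y·(1+y)³)^p·((1+y)·(1+y+x·y))^{ℓ−2p−1}. -/
/-- The Catalan number `Cat k = (1/(k+1)) * binom(2k, k)`, as a real number. -/
noncomputable def catalanR (k : ℕ) : ℝ := (1 / ((k : ℝ) + 1)) * (Nat.choose (2 * k) k : ℝ)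

/-- The Narayana number `N(n,k) = (1/n) * binom(n,k) * binom(n,k-1)`, as a real number. -/
noncomputable def narayanaR (n k : ℕ) : ℝ :=
  (1 / (n : ℝ)) * (Nat.choose n k : ℝ) * (Nat.choose n (k - 1) : ℝ)

/-- The Motzkin polynomial coefficient `M(n,k) = binom(n,2k) * Cat_k`, as a real number. -/
noncomputable def motzkinCoeffR (n k : ℕ) : ℝ := (Nat.choose n (2 * k) : ℝ) * catalanR k

open Finset

/-! Touchard's identity `∑ₖ N(n+1,k+1) tᵏ = ∑ₚ M(n,p) tᵖ (1+t)^(n-2p)`, in homogeneous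
form, is the theorem after the substitution `u = x y`, `v = 1 + y`, `ℓ = n + 1` and
cancelling `u y v`. Comparing coefficients of `uᵏ` reduces it to
`∑ₚ C(n,2p) Cat_p C(n-2p,k-p) = N(n+1,k+1)`. Both `C(n,2p) C(2p,p) C(n-2p,k-p)` and
`C(n,k) C(k,p) C(n-k,p)` are the multinomial coefficient `n! / (p! p! (k-p)! (n-k-p)!)`;
the factor `1/(p+1)` of `Cat_p` turns `C(n-k,p)` into `C(n-k+1,p+1)/(n-k+1)`, and
Vandermonde's identity then sums over `p`. -/

theorem choose_two_mul_mul_choose_mul_choose {n k p : ℕ} (hp : p ≤ k) :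
    n.choose (2 * p) * (2 * p).choose p * (n - 2 * p).choose (k - p)
      = n.choose k * k.choose p * (n - k).choose p := by
  have h₁ := Nat.choose_mul (n := n) (k := 2 * p) (s := p) (by omega)
  have h₂ := Nat.choose_mul (n := n) (k := k) hp
  have h₃ := Nat.choose_mul (n := n - p) (k := k) hp
  have h₄ := Nat.choose_mul (n := n - p) (k := k) (s := k - p) (by omega)
  rw [show 2 * p - p = p by omega] at h₁
  rw [show n - p - p = n - 2 * p by omega] at h₃
  rw [show n - p - (k - p) = n - k by omega, show k - (k - p) = p by omega,
    Nat.choose_symm hp] at h₄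
  rw [h₁, h₂, mul_assoc, h₃.symm.trans h₄]
  ring

theorem sum_range_choose_mul_choose_succ (k m : ℕ) :
    ∑ p ∈ range (k + 1), k.choose p * m.choose (p + 1) = (k + m).choose (k + 1) := by
  rw [Nat.add_choose_eq, Finset.Nat.sum_antidiagonal_succ', Nat.choose_succ_self, zero_mul,
    zero_add, Finset.Nat.sum_antidiagonal_eq_sum_range_succ_mk, ← sum_range_reflect]
  refine sum_congr rfl fun p hp => ?_
  rw [show k + 1 - 1 - p = k - p by omega, Nat.choose_symm (by simpa [Nat.lt_succ_iff] using hp)]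

theorem motzkinCoeffR_mul_choose {n k p : ℕ} (hp : p ≤ k) :
    motzkinCoeffR n p * (n - 2 * p).choose (k - p)
      = n.choose k / (n - k + 1 : ℕ) * (k.choose p * (n - k + 1).choose (p + 1) : ℕ) := by
  have hshift : (n - k + 1) * (n - k).choose p = (n - k + 1).choose (p + 1) * (p + 1) :=
    Nat.add_one_mul_choose_eq _ _
  have hmultinomial := choose_two_mul_mul_choose_mul_choose (n := n) hp
  rw [motzkinCoeffR, catalanR]
  field_simp
  norm_cast
  rw [hmultinomial]
  linear_combination (n.choose k * k.choose p) * hshift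

theorem narayanaR_succ_succ {n k : ℕ} (hk : k ≤ n) :
    narayanaR (n + 1) (k + 1) = n.choose k / (n - k + 1 : ℕ) * (n + 1).choose (k + 1) := by
  have h := Nat.choose_mul_succ_eq n k
  rw [show n + 1 - k = n - k + 1 by omega] at h
  rw [narayanaR, Nat.add_sub_cancel]
  field_simp
  norm_cast
  linear_combination (n + 1).choose (k + 1) * h.symm

theorem sum_motzkinCoeffR_mul_choose {n k : ℕ} (hk : k ≤ n) :
    ∑ p ∈ range (k + 1), motzkinCoeffR n p * (n - 2 * p).choose (k - p)
      = narayanaR (n + 1) (k + 1) := by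
  rw [sum_congr rfl fun p hp => motzkinCoeffR_mul_choose (Nat.lt_succ_iff.mp (mem_range.mp hp)),
    ← mul_sum, ← Nat.cast_sum, sum_range_choose_mul_choose_succ,
    show k + (n - k + 1) = n + 1 by omega, narayanaR_succ_succ hk]

theorem motzkinCoeffR_eq_zero_of_lt {n p : ℕ} (h : n < 2 * p) : motzkinCoeffR n p = 0 := by
  simp [motzkinCoeffR, Nat.choose_eq_zero_of_lt h]

theorem motzkinCoeffR_mul_pow_eq_sum (n p : ℕ) (u v : ℝ) :
    motzkinCoeffR n p * (u * v ^ 3) ^ p * (v * (v + u)) ^ (n - 2 * p)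
      = ∑ k ∈ Ico p (n + 1),
          motzkinCoeffR n p * (n - 2 * p).choose (k - p) * u ^ k * v ^ (2 * n - k) := by
  rcases lt_or_ge n (2 * p) with h | h
  · simp [motzkinCoeffR_eq_zero_of_lt h]
  have hlen : n + 1 - p = (n - 2 * p + 1) + p := by omega
  rw [sum_Ico_eq_sum_range, hlen, sum_range_add, add_comm v u, mul_pow v, add_pow,
    mul_sum, mul_sum]
  have htail : ∑ j ∈ range p,
      motzkinCoeffR n p * (n - 2 * p).choose (p + (n - 2 * p + 1 + j) - p)
        * u ^ (p + (n - 2 * p + 1 + j)) * v ^ (2 * n - (p + (n - 2 * p + 1 + j))) = 0 :=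
    sum_eq_zero fun j _ => by rw [Nat.choose_eq_zero_of_lt (by omega)]; simp
  rw [htail, add_zero]
  refine sum_congr rfl fun j hj => ?_
  have := mem_range.mp hj
  rw [show 2 * n - (p + j) = 3 * p + (n - 2 * p) + (n - 2 * p - j) by omega,
    Nat.add_sub_cancel_left]
  ring

theorem sum_motzkinCoeffR_mul_pow (n : ℕ) (u v : ℝ) :
    ∑ p ∈ range (n / 2 + 1), motzkinCoeffR n p * (u * v ^ 3) ^ p * (v * (v + u)) ^ (n - 2 * p)
      = ∑ k ∈ range (n + 1), narayanaR (n + 1) (k + 1) * u ^ k * v ^ (2 * n - k) := by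
  have hext : ∑ p ∈ range (n / 2 + 1),
      motzkinCoeffR n p * (u * v ^ 3) ^ p * (v * (v + u)) ^ (n - 2 * p)
      = ∑ p ∈ range (n + 1),
      motzkinCoeffR n p * (u * v ^ 3) ^ p * (v * (v + u)) ^ (n - 2 * p) := by
    refine sum_subset (range_subset_range.2 (by omega)) fun p _ hp => ?_
    rw [motzkinCoeffR_eq_zero_of_lt (by simp at hp; omega)]
    ring
  rw [hext]
  simp only [motzkinCoeffR_mul_pow_eq_sum]
  rw [range_eq_Ico, sum_Ico_Ico_comm]
  refine sum_congr rfl fun k hk => ?_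
  rw [← sum_mul, ← sum_mul, ← range_eq_Ico,
    sum_motzkinCoeffR_mul_choose (by simp at hk; omega)]

theorem stmt0 (ℓ : ℕ) (hℓ : 1 ≤ ℓ) (x y : ℝ) :
    y * ∑ h ∈ Finset.Icc 1 ℓ, narayanaR ℓ h * (x * y) ^ h * (1 + y) ^ (2 * ℓ - h)
      = x * y ^ 2 * (1 + y) *
        ∑ p ∈ Finset.range ((ℓ - 1) / 2 + 1),
          motzkinCoeffR (ℓ - 1) p * (x * y * (1 + y) ^ 3) ^ p *
            ((1 + y) * (1 + y + x * y)) ^ (ℓ - 2 * p - 1) := by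
  obtain ⟨n, rfl⟩ : ∃ n, ℓ = n + 1 := ⟨ℓ - 1, by omega⟩
  have hlhs :
      ∑ h ∈ Icc 1 (n + 1), narayanaR (n + 1) h * (x * y) ^ h * (1 + y) ^ (2 * (n + 1) - h)
      = x * y * (1 + y) *
        ∑ k ∈ range (n + 1),
          narayanaR (n + 1) (k + 1) * (x * y) ^ k * (1 + y) ^ (2 * n - k) := by
    rw [← Ico_add_one_right_eq_Icc, sum_Ico_eq_sum_range, Nat.add_sub_cancel, mul_sum]
    refine sum_congr rfl fun k hk => ?_
    have := mem_range.mp hk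
    rw [show 2 * (n + 1) - (1 + k) = 2 * n - k + 1 by omega, add_comm 1 k]
    ring
  have hexp (p : ℕ) : n + 1 - 2 * p - 1 = n - 2 * p := by omega
  simp only [hlhs, Nat.add_sub_cancel, hexp, sum_motzkinCoeffR_mul_pow]
  ring
end

section
/- For every integer n ≥ 1 and every real number x, Σ_{k=1}^{n} (1/n)·binom(n,k)·binom(n,k−1)·x^{k−1} = Σ_{k=0}^{⌊(n−1)/2⌋} Cat_k·binom(n−1,2k)·x^k·(1+x)^{n−2k−1}. -/
/-!
Compare coefficients of `x ^ m`, writing `N = n - 1`. On the right the coefficient is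
`∑ k, Cat_k C(N, 2k) C(N - 2k, m - k)`. Reordering the multinomial coefficient and using
`C(2k, k) = (k + 1) Cat_k` turns the `k`-th term into `C(N, m) C(m, k) C(N - m, k) / (k + 1)`, and
`C(N - m, k) / (k + 1) = C(N - m + 1, k + 1) / (N - m + 1)`, so Vandermonde's identity sums the
terms to `C(N, m) C(N + 1, m + 1) / (N - m + 1) = C(N + 1, m + 1) C(N + 1, m) / (N + 1)`, which is
the coefficient on the left.
-/

open Finset

namespace Nat

theorem choose_add_mul_choose_mul_choose_sub (N a b c : ℕ) :
    N.choose (a + b) * (a + b).choose a * (N - (a + b)).choose c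
      = N.choose a * (N - a).choose (b + c) * (b + c).choose b := by
  rw [choose_mul (le_add_right a b), Nat.add_sub_cancel_left, Nat.mul_assoc (N.choose a),
    Nat.mul_assoc (N.choose a), choose_mul (le_add_right b c), Nat.add_sub_cancel_left, Nat.sub_sub]

theorem choose_add_mul_choose_mul_choose_sub_comm (N a b c : ℕ) :
    N.choose (a + b) * (a + b).choose a * (N - (a + b)).choose c
      = N.choose (a + c) * (a + c).choose a * (N - (a + c)).choose b := by
  rw [choose_add_mul_choose_mul_choose_sub, choose_add_mul_choose_mul_choose_sub, Nat.add_comm c,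
    choose_symm_add]

theorem sum_range_choose_mul_choose_succ (m n : ℕ) :
    ∑ k ∈ range (m + 1), m.choose k * n.choose (k + 1) = (m + n).choose (m + 1) := by
  rw [Nat.add_comm m n, add_choose_eq, Finset.Nat.sum_antidiagonal_eq_sum_range_succ
    (fun i j => n.choose i * m.choose j), sum_range_succ' _ (m + 1), Nat.sub_zero,
    choose_eq_zero_of_lt (lt_add_one m), Nat.mul_zero, Nat.add_zero]
  refine sum_congr rfl fun k hk => ?_
  rw [Nat.mul_comm, Nat.add_sub_add_right, choose_symm (mem_range_succ_iff.mp hk)]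

theorem succ_mul_catalan_mul_choose_mul_choose (N m k : ℕ) (hk : k ≤ m) :
    (k + 1) * (catalan k * N.choose (2 * k) * (N - 2 * k).choose (m - k))
      = N.choose m * m.choose k * (N - m).choose k := by
  have hswap := choose_add_mul_choose_mul_choose_sub_comm N k k (m - k)
  rw [← two_mul, Nat.add_sub_cancel' hk] at hswap
  rw [← hswap, ← centralBinom_eq_two_mul_choose, ← succ_mul_catalan_eq_centralBinom]
  ring

theorem succ_mul_sum_catalan_mul_choose_mul_choose {N m : ℕ} (hm : m ≤ N) :
    (N + 1) * ∑ k ∈ range (m + 1), catalan k * N.choose (2 * k) * (N - 2 * k).choose (m - k)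
      = (N + 1).choose (m + 1) * (N + 1).choose m := by
  have hterm : ∀ k ∈ range (m + 1),
      (N - m + 1) * (catalan k * N.choose (2 * k) * (N - 2 * k).choose (m - k))
        = N.choose m * (m.choose k * (N - m + 1).choose (k + 1)) := by
    intro k hk
    apply Nat.eq_of_mul_eq_mul_left k.succ_pos
    calc (k + 1) * ((N - m + 1) * (catalan k * N.choose (2 * k) * (N - 2 * k).choose (m - k)))
        = (N - m + 1) * (N.choose m * m.choose k * (N - m).choose k) := by
          rw [← succ_mul_catalan_mul_choose_mul_choose N m k (mem_range_succ_iff.mp hk)]; ring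
      _ = N.choose m * m.choose k * ((N - m + 1) * (N - m).choose k) := by ring
      _ = (k + 1) * (N.choose m * (m.choose k * (N - m + 1).choose (k + 1))) := by
          rw [add_one_mul_choose_eq]; ring
  have hsum : (N - m + 1) * ∑ k ∈ range (m + 1),
      catalan k * N.choose (2 * k) * (N - 2 * k).choose (m - k)
        = N.choose m * (N + 1).choose (m + 1) := by
    rw [mul_sum, sum_congr rfl hterm, ← mul_sum, sum_range_choose_mul_choose_succ,
      show m + (N - m + 1) = N + 1 by omega]
  apply Nat.eq_of_mul_eq_mul_left (N - m).succ_pos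
  calc (N - m + 1) * ((N + 1) * ∑ k ∈ range (m + 1),
        catalan k * N.choose (2 * k) * (N - 2 * k).choose (m - k))
      = N.choose m * (N + 1) * (N + 1).choose (m + 1) := by rw [Nat.mul_left_comm, hsum]; ring
    _ = (N - m + 1) * ((N + 1).choose (m + 1) * (N + 1).choose m) := by
      rw [choose_mul_succ_eq, show N + 1 - m = N - m + 1 by omega]; ring

end Nat

open Polynomial in
theorem sum_choose_mul_choose_X_pow_eq_sum_catalan (N : ℕ) :
    ∑ j ∈ range (N + 1), C ((N + 1).choose (j + 1) * (N + 1).choose j) * X ^ j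
      = C (N + 1) * ∑ k ∈ range (N / 2 + 1),
          C (catalan k * N.choose (2 * k)) * X ^ k * (1 + X) ^ (N - 2 * k) := by
  ext m
  rw [finsetSum_coeff, coeff_C_mul, finsetSum_coeff]
  simp only [coeff_C_mul_X_pow, sum_ite_eq, mem_range]
  simp only [mul_right_comm _ (X ^ _), coeff_mul_X_pow', coeff_C_mul, add_comm (1 : ℕ[X]) X,
    coeff_X_add_one_pow, Nat.cast_id]
  set f : ℕ → ℕ := fun k => catalan k * N.choose (2 * k) * (N - 2 * k).choose (m - k)
  have hf : ∀ k, N < 2 * k → f k = 0 := fun k hk => by simp [f, Nat.choose_eq_zero_of_lt hk]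
  have hrange : ∑ k ∈ range (N / 2 + 1), (if k ≤ m then f k else 0)
      = ∑ k ∈ range (m + 1), f k := calc
    _ = ∑ k ∈ range (N / 2 + 1) with k ≤ m, f k := (sum_filter _ _).symm
    _ = ∑ k ∈ range (m + 1) with k ≤ N / 2, f k := by
      congr 1; ext k; simp only [mem_filter, mem_range]; omega
    _ = ∑ k ∈ range (m + 1), f k :=
      sum_filter_of_ne fun k _ hk => by by_contra h; exact hk (hf k (by omega))
  rw [hrange]
  rcases le_or_gt m N with hm | hm
  · rw [if_pos (by omega), Nat.succ_mul_sum_catalan_mul_choose_mul_choose hm]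
  · rw [if_neg (by omega), eq_comm, Nat.mul_eq_zero]
    refine Or.inr (sum_eq_zero fun k _ => ?_)
    rcases le_or_gt (2 * k) N with hk | hk
    · simp [f, Nat.choose_eq_zero_of_lt (show N - 2 * k < m - k by omega)]
    · exact hf k hk

theorem catalanR_eq_catalan (k : ℕ) : catalanR k = catalan k := by
  rw [catalanR, ← Nat.centralBinom_eq_two_mul_choose, ← succ_mul_catalan_eq_centralBinom]
  push_cast
  field_simp

theorem stmt1 (n : ℕ) (hn : 1 ≤ n) (x : ℝ) :
    ∑ k ∈ Finset.Icc 1 n,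
        (1 / (n : ℝ)) * (Nat.choose n k : ℝ) * (Nat.choose n (k - 1) : ℝ) * x ^ (k - 1)
      = ∑ k ∈ Finset.range ((n - 1) / 2 + 1),
          catalanR k * (Nat.choose (n - 1) (2 * k) : ℝ) * x ^ k * (1 + x) ^ (n - 2 * k - 1) := by
  obtain ⟨N, rfl⟩ : ∃ N, n = N + 1 := ⟨n - 1, by omega⟩
  have h := congrArg (Polynomial.aeval x) (sum_choose_mul_choose_X_pow_eq_sum_catalan N)
  simp only [map_sum, map_mul, map_pow, map_add, map_one, eq_natCast, map_natCast,
    Polynomial.aeval_X] at h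
  calc
    _ = 1 / ((N : ℝ) + 1) * ∑ j ∈ range (N + 1),
          ((N + 1).choose (j + 1) : ℝ) * ((N + 1).choose j : ℝ) * x ^ j := by
      rw [← Finset.Ico_add_one_right_eq_Icc, Finset.sum_Ico_eq_sum_range, mul_sum]
      refine sum_congr (by simp) fun j _ => ?_
      rw [add_comm 1 j, Nat.add_sub_cancel]
      push_cast
      ring
    _ = _ := by
      rw [h, ← mul_assoc, one_div_mul_cancel (by positivity), one_mul]
      refine sum_congr (by simp) fun k _ => ?_
      rw [catalanR_eq_catalan, Nat.add_sub_cancel, Nat.sub_right_comm, Nat.add_sub_cancel]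
end

section
/- For every integer n ≥ 1, Cat_n = Σ_{k=0}^{⌊(n−1)/2⌋} Cat_k·binom(n−1,2k)·2^{n−2k−1} (Touchard's identity). -/
open Polynomial Finset in
lemma aux_coeff (k m : ℕ) :
    (((X : ℕ[X]) ^ 2 + 1) ^ k).coeff m = if m % 2 = 0 then k.choose (m / 2) else 0 := by
  rw [add_pow]
  rw [finset_sum_coeff]
  have hterm : ∀ i ∈ range (k+1),
      (((X:ℕ[X])^2)^i * 1^(k-i) * (k.choose i : ℕ[X])).coeff m
        = if 2*i = m then k.choose i else 0 := by
    intro i _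
    rw [one_pow, mul_one, ← pow_mul, ← C_eq_natCast, coeff_mul_C, coeff_X_pow]
    by_cases h : 2*i = m
    · simp [h]
    · rw [if_neg (by omega), if_neg h, zero_mul]
  rw [Finset.sum_congr rfl hterm]
  by_cases hm : m % 2 = 0
  · simp only [hm, if_true]
    by_cases hk : m / 2 ≤ k
    · rw [Finset.sum_eq_single (m/2)]
      · rw [if_pos (by omega)]
      · intro b _ hb; rw [if_neg]; omega
      · intro h; exfalso; apply h; simp; omega
    · rw [Finset.sum_eq_zero, Nat.choose_eq_zero_of_lt (by omega)]
      intro b hb; simp at hb; rw [if_neg]; omega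
  · simp only [hm, if_false]
    apply Finset.sum_eq_zero
    intro b _; rw [if_neg]; omega

open Polynomial Finset in
lemma aux_reindex {M : Type*} [AddCommMonoid M] (N : ℕ) (f : ℕ → M)
    (hf : ∀ t, t % 2 = 1 → f t = 0) :
    ∑ t ∈ range (N+1), f t = ∑ k ∈ range (N/2+1), f (2*k) := by
  have himg : (range (N/2+1)).image (fun k => 2*k) ⊆ range (N+1) := by
    intro t ht
    simp only [Finset.mem_image, Finset.mem_range] at ht ⊢
    obtain ⟨k, hk, rfl⟩ := ht; omega
  rw [← Finset.sum_image (f := f) (g := fun k => 2*k) (by intro x _ y _ h; simpa using h)]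
  symm
  apply Finset.sum_subset himg
  intro t ht hnot
  simp only [Finset.mem_image, Finset.mem_range] at ht hnot
  apply hf
  by_contra h
  exact hnot ⟨t/2, by omega, by omega⟩

open Polynomial Finset in
lemma aux_key (n j : ℕ) :
    ∑ k ∈ range (n/2+1), n.choose (2*k) * ((2*k).choose (k+j)) * 2^(n-2*k)
      = (2*n).choose (n+2*j) := by
  have hC2 : (2 : ℕ[X]) = C 2 := (map_ofNat (C : ℕ →+* ℕ[X]) 2).symm
  have h0 : ((X:ℕ[X])+1)^(2*n) = (((X:ℕ[X])^2+1) + 2*X)^n := by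
    rw [pow_mul]
    congr 1
    ring
  have hterm : ∀ t ∈ range (n+1),
      ((((X:ℕ[X])^2+1)^t * (2*X)^(n-t) * (n.choose t : ℕ[X])).coeff (n+2*j))
        = if t % 2 = 0 then n.choose (2*(t/2)) * ((2*(t/2)).choose (t/2+j)) * 2^(n-2*(t/2)) else 0 := by
    intro t ht
    simp only [Finset.mem_range] at ht
    have hrw : ((X:ℕ[X])^2+1)^t * (2*X)^(n-t) * (n.choose t : ℕ[X])
        = (((X:ℕ[X])^2+1)^t * C (2^(n-t) * n.choose t)) * X^(n-t) := by
      rw [← C_eq_natCast, Nat.cast_id, hC2, mul_pow, ← C_pow, C_mul]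
      ring
    rw [hrw, coeff_mul_X_pow', if_pos (by omega : n - t ≤ n + 2*j), coeff_mul_C]
    have he : n + 2*j - (n-t) = 2*j + t := by omega
    rw [he, aux_coeff]
    by_cases hp : t % 2 = 0
    · rw [if_pos (by omega), if_pos hp]
      have h1 : (2*j+t)/2 = t/2 + j := by omega
      have h2 : 2*(t/2) = t := by omega
      rw [h1, h2]
      ring
    · rw [if_neg (by omega), if_neg hp, zero_mul]
  calc ∑ k ∈ range (n/2+1), n.choose (2*k) * ((2*k).choose (k+j)) * 2^(n-2*k)
      = ∑ t ∈ range (n+1), (if t % 2 = 0 then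
          n.choose (2*(t/2)) * ((2*(t/2)).choose (t/2+j)) * 2^(n-2*(t/2)) else 0) := by
        rw [aux_reindex n _ (fun t h => by rw [if_neg (by omega)])]
        apply Finset.sum_congr rfl
        intro k _
        rw [if_pos (by omega)]
        have h2 : 2*k/2 = k := by omega
        rw [h2]
    _ = (((X:ℕ[X])+1)^(2*n)).coeff (n+2*j) := by
        rw [h0, add_pow, finset_sum_coeff, Finset.sum_congr rfl hterm]
    _ = (2*n).choose (n+2*j) := coeff_X_add_one_pow ℕ _ _

lemma cat1 (k : ℕ) :
    catalanR k = ((2*k).choose k : ℝ) - ((2*k).choose (k+1) : ℝ) := by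
  have h := Nat.choose_succ_right_eq (2*k) k
  have h2 : 2*k - k = k := by omega
  rw [h2] at h
  have hR : ((2*k).choose (k+1) : ℝ) * (k+1) = ((2*k).choose k : ℝ) * k := by
    exact_mod_cast congrArg (Nat.cast : ℕ → ℝ) h
  have hk : ((k:ℝ)+1) ≠ 0 := by positivity
  unfold catalanR
  field_simp
  nlinarith [hR]

lemma cat2N (m : ℕ) :
    (2*m+2).choose (m+1) + (2*m).choose (m+2)
      = (2*m).choose m + (2*m+2).choose (m+2) := by
  have p1 : (2*m+2).choose (m+1) = (2*m+1).choose m + (2*m+1).choose (m+1) :=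
    Nat.choose_succ_succ _ _
  have p2 : (2*m+2).choose (m+2) = (2*m+1).choose (m+1) + (2*m+1).choose (m+2) :=
    Nat.choose_succ_succ _ _
  have p3 : (2*m+1).choose (m+1) = (2*m).choose m + (2*m).choose (m+1) :=
    Nat.choose_succ_succ _ _
  have p4 : (2*m+1).choose (m+2) = (2*m).choose (m+1) + (2*m).choose (m+2) :=
    Nat.choose_succ_succ _ _
  have p5 : (2*m+1).choose m = (2*m+1).choose (m+1) := by
    have := Nat.choose_symm (show m+1 ≤ 2*m+1 by omega)
    have e : 2*m+1-(m+1) = m := by omega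
    rw [e] at this
    omega
  omega

lemma cat2 (m : ℕ) :
    catalanR (m+1) = ((2*m).choose m : ℝ) - ((2*m).choose (m+2) : ℝ) := by
  have h := cat1 (m+1)
  have e1 : 2*(m+1) = 2*m+2 := by ring
  have e2 : (m+1)+1 = m+2 := rfl
  rw [e1, e2] at h
  have hc := congrArg (Nat.cast : ℕ → ℝ) (cat2N m)
  push_cast at hc
  rw [h]
  linarith

open Polynomial Finset in
/-- Touchard's identity. -/
theorem stmt3 (n : ℕ) (hn : 1 ≤ n) :
    catalanR n = ∑ k ∈ Finset.range ((n - 1) / 2 + 1),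
      catalanR k * (Nat.choose (n - 1) (2 * k) : ℝ) * (2 : ℝ) ^ (n - 2 * k - 1) := by
  obtain ⟨m, rfl⟩ : ∃ m, n = m + 1 := ⟨n-1, by omega⟩
  have hrange : m + 1 - 1 = m := rfl
  rw [hrange]
  have hred : ∀ k ∈ Finset.range (m/2+1),
      catalanR k * (m.choose (2*k) : ℝ) * (2:ℝ) ^ (m+1-2*k-1)
        = (((2*k).choose (k+0) : ℝ) * (m.choose (2*k)) * 2^(m-2*k))
          - (((2*k).choose (k+1) : ℝ) * (m.choose (2*k)) * 2^(m-2*k)) := by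
    intro k hk
    simp only [Finset.mem_range] at hk
    have h1 : m+1-2*k-1 = m-2*k := by omega
    rw [h1, cat1 k, add_zero]
    ring
  rw [Finset.sum_congr rfl hred, Finset.sum_sub_distrib]
  have c : ∀ j : ℕ, ∑ k ∈ range (m/2+1),
      (((2*k).choose (k+j) : ℝ) * (m.choose (2*k)) * 2^(m-2*k)) = ((2*m).choose (m+2*j) : ℝ) := by
    intro j
    have := congrArg (Nat.cast : ℕ → ℝ) (aux_key m j)
    push_cast at this
    rw [← this]
    apply Finset.sum_congr rfl
    intro k _
    ring
  rw [c 0, c 1, cat2 m]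
  norm_num
end

section
/- For integers 1 ≤ p ≤ u, the number of Dyck words of semilength u that return to level 0 exactly p times (equivalently, that are the concatenation of exactly p nonempty Dyck words each staying strictly above level 0 between its endpoints) equals (p/u)·binom(2u−p−1,u−1). -/
open Set

/-- Nonnegative ±1 paths of length `n` with `j` up-steps (sum `2j - n`). -/
def Pset (n j : ℕ) : Set (List ℤ) :=
  {l | l.length = n ∧ (∀ x ∈ l, x = 1 ∨ x = -1) ∧ (∀ k : ℕ, 0 ≤ (l.take k).sum) ∧
    l.sum = 2 * (j : ℤ) - n}

lemma take_sum_append (x y : List ℤ) (k : ℕ) :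
    ((x ++ y).take k).sum = (x.take k).sum + (y.take (k - x.length)).sum := by
  rw [List.take_append, List.sum_append]

lemma take_sum_of_le (l : List ℤ) {k : ℕ} (h : l.length ≤ k) : (l.take k).sum = l.sum := by
  rw [List.take_of_length_le h]

lemma take_sum_succ (l : List ℤ) {i : ℕ} (h : i < l.length) :
    (l.take (i + 1)).sum = (l.take i).sum + l[i] := by
  rw [List.take_succ, List.sum_append]
  simp [List.getElem?_eq_getElem h]

lemma sum_parity (l : List ℤ) (h : ∀ x ∈ l, x = 1 ∨ x = -1) :
    (2 : ℤ) ∣ (l.sum + l.length) := by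
  induction l with
  | nil => simp
  | cons a t ih =>
    have ha := h a (by simp)
    have := ih (fun x hx => h x (by simp [hx]))
    obtain ⟨c, hc⟩ := this
    push_cast at hc ⊢
    rcases ha with rfl | rfl
    · exact ⟨c + 1, by simp only [List.sum_cons, List.length_cons]; push_cast; linarith⟩
    · exact ⟨c, by simp only [List.sum_cons, List.length_cons]; push_cast; linarith⟩

lemma sum_le_len (l : List ℤ) (h : ∀ x ∈ l, x = 1 ∨ x = -1) : l.sum ≤ l.length := by
  induction l with
  | nil => simp
  | cons a t ih =>
    have ha := h a (by simp)
    have := ih (fun x hx => h x (by simp [hx]))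
    rcases ha with rfl | rfl <;> · simp only [List.sum_cons, List.length_cons]; push_cast; linarith

lemma finite_steps (n : ℕ) :
    {l : List ℤ | l.length = n ∧ ∀ x ∈ l, x = 1 ∨ x = -1}.Finite := by
  induction n with
  | zero =>
    apply Set.Finite.subset (Set.finite_singleton ([] : List ℤ))
    rintro l ⟨hl, -⟩
    simp [List.length_eq_zero_iff.mp hl]
  | succ n ih =>
    apply Set.Finite.subset (Set.Finite.image2 (· :: ·) ((Set.finite_singleton (-1 : ℤ)).insert 1) ih)
    rintro l ⟨hl, hx⟩
    cases l with
    | nil => simp at hl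
    | cons a t =>
      refine Set.mem_image2_of_mem ?_ ⟨by simpa using hl, fun x hx' => hx x (by simp [hx'])⟩
      simpa using hx a (by simp)

lemma Pset_finite (n j : ℕ) : (Pset n j).Finite :=
  (finite_steps n).subset (fun l hl => ⟨hl.1, hl.2.1⟩)

lemma ncard_sprod (s t : Set (List ℤ)) : (s ×ˢ t).ncard = s.ncard * t.ncard := by
  rw [← Nat.card_coe_set_eq, ← Nat.card_coe_set_eq, ← Nat.card_coe_set_eq,
    Nat.card_congr (Equiv.Set.prod s t), Nat.card_prod]
lemma choose_dec {n k : ℕ} (h : n ≤ 2*k + 1) : n.choose (k+1) ≤ n.choose k := by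
  have h2 := Nat.choose_succ_right_eq n k
  have h3 : n.choose (k+1) * (k+1) ≤ n.choose k * (k+1) := by
    rw [h2]; exact Nat.mul_le_mul_left _ (by omega)
  exact Nat.le_of_mul_le_mul_right h3 (by omega)

lemma choose_inc {n k : ℕ} (h : 2*k + 1 ≤ n) : n.choose k ≤ n.choose (k+1) := by
  have h2 := Nat.choose_succ_right_eq n k
  have h3 : n.choose k * (k+1) ≤ n.choose (k+1) * (k+1) := by
    rw [h2]; exact Nat.mul_le_mul_left _ (by omega)
  exact Nat.le_of_mul_le_mul_right h3 (by omega)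

lemma Pset_empty_of_lt {n j : ℕ} (h : 2*(j:ℤ) < n) : Pset n j = ∅ := by
  ext l
  simp only [Pset, mem_setOf_eq, mem_empty_iff_false, iff_false]
  rintro ⟨hlen, -, hpre, hsum⟩
  have h1 := hpre l.length
  rw [take_sum_of_le l le_rfl, hsum] at h1
  omega

lemma Pset_succ (n j : ℕ) (h : (n:ℤ) + 1 ≤ 2*j) :
    Pset (n+1) j = (fun l => l ++ [1]) '' Pset n (j-1) ∪ (fun l => l ++ [-1]) '' Pset n j := by
  have hj : 1 ≤ j := by omega
  ext l
  constructor
  · rintro ⟨hlen, hx, hpre, hsum⟩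
    have hne : l ≠ [] := by intro hc; rw [hc] at hlen; simp at hlen
    have hb : l.getLast hne = 1 ∨ l.getLast hne = -1 := hx _ (List.getLast_mem hne)
    have hdl : l.dropLast ++ [l.getLast hne] = l := List.dropLast_append_getLast hne
    have hlen' : l.dropLast.length = n := by simp [List.length_dropLast, hlen]
    have hxd : ∀ x ∈ l.dropLast, x = 1 ∨ x = -1 := fun x hx' => hx x (List.mem_of_mem_dropLast hx')
    have hpred : ∀ k, 0 ≤ (l.dropLast.take k).sum := by
      intro k
      rw [List.dropLast_eq_take, List.take_take]
      exact hpre _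
    have hsumd : l.dropLast.sum + l.getLast hne = l.sum := by
      conv_rhs => rw [← hdl]
      rw [List.sum_append]; simp
    rcases hb with hb1 | hb1
    · left
      refine ⟨l.dropLast, ⟨hlen', hxd, hpred, ?_⟩, by rw [← hb1]; exact hdl⟩
      have : ((j:ℤ) - 1) = ((j - 1 : ℕ) : ℤ) := by push_cast [hj]; ring
      push_cast at hsum ⊢
      rw [hb1] at hsumd
      omega
    · right
      refine ⟨l.dropLast, ⟨hlen', hxd, hpred, ?_⟩, by rw [← hb1]; exact hdl⟩
      push_cast at hsum ⊢
      rw [hb1] at hsumd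
      omega
  · rintro (⟨A, ⟨hlen, hx, hpre, hsum⟩, rfl⟩ | ⟨A, ⟨hlen, hx, hpre, hsum⟩, rfl⟩)
    · refine ⟨by simp [hlen], ?_, ?_, ?_⟩
      · intro x hx'
        rcases List.mem_append.mp hx' with h1 | h1
        · exact hx x h1
        · left; simpa using h1
      · intro k
        rw [take_sum_append]
        have h2 : 0 ≤ (([1] : List ℤ).take (k - A.length)).sum := by
          rcases Nat.eq_zero_or_pos (k - A.length) with h3 | h3
          · simp [h3]
          · rw [take_sum_of_le _ (by simp; omega)]; simp
        linarith [hpre k]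
      · rw [List.sum_append, hsum]
        simp only [List.sum_cons, List.sum_nil, add_zero]
        push_cast
        omega
    · refine ⟨by simp [hlen], ?_, ?_, ?_⟩
      · intro x hx'
        rcases List.mem_append.mp hx' with h1 | h1
        · exact hx x h1
        · right; simpa using h1
      · intro k
        rw [take_sum_append, hlen]
        rcases le_or_gt k n with h3 | h3
        · have : k - n = 0 := by omega
          rw [this]
          simpa using hpre k
        · have h4 : (A.take k).sum = A.sum := take_sum_of_le A (by omega)
          have h5 : (([-1] : List ℤ).take (k - n)).sum = -1 := by
            rw [take_sum_of_le _ (by simp; omega)]; simp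
          rw [h4, h5, hsum]
          omega
      · rw [List.sum_append, hsum]; push_cast; simp; ring

lemma Pset_ncard : ∀ n j, (Pset n j).ncard = n.choose j - n.choose (j+1) := by
  intro n
  induction n with
  | zero =>
    intro j
    cases j with
    | zero =>
      have : Pset 0 0 = {([] : List ℤ)} := by
        ext l
        simp only [Pset, mem_setOf_eq, mem_singleton_iff, List.length_eq_zero_iff]
        constructor
        · rintro ⟨rfl, -⟩; rfl
        · rintro rfl; refine ⟨rfl, by simp, by simp, by simp⟩
      rw [this]; simp
    | succ j =>
      have : Pset 0 (j+1) = ∅ := by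
        ext l
        simp only [Pset, mem_setOf_eq, mem_empty_iff_false, iff_false, List.length_eq_zero_iff]
        rintro ⟨rfl, -, -, hsum⟩
        simp at hsum
        omega
      rw [this]; simp [Nat.choose_eq_zero_of_lt]
  | succ n ih =>
    intro j
    by_cases h : (n:ℤ) + 1 ≤ 2*j
    · have hj : 1 ≤ j := by omega
      obtain ⟨j', rfl⟩ : ∃ j', j = j' + 1 := ⟨j - 1, by omega⟩
      rw [Pset_succ n (j'+1) h]
      have hdisj : Disjoint ((fun l => l ++ [(1:ℤ)]) '' Pset n (j'+1-1))
          ((fun l => l ++ [(-1:ℤ)]) '' Pset n (j'+1)) := by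
        rw [Set.disjoint_left]
        rintro x ⟨a, -, rfl⟩ ⟨b, -, hb⟩
        have := congrArg List.getLast? hb
        rw [List.getLast?_concat, List.getLast?_concat] at this
        simp at this
      rw [Set.ncard_union_eq hdisj ((Pset_finite _ _).image _) ((Pset_finite _ _).image _),
        Set.ncard_image_of_injOn (fun a _ b _ hab => List.append_cancel_right hab),
        Set.ncard_image_of_injOn (fun a _ b _ hab => List.append_cancel_right hab),
        ih, ih]
      have e1 : j' + 1 - 1 = j' := rfl
      rw [e1]
      have p1 : (n+1).choose (j'+1) = n.choose j' + n.choose (j'+1) := Nat.choose_succ_succ n j'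
      have p2 : (n+1).choose (j'+1+1) = n.choose (j'+1) + n.choose (j'+1+1) := Nat.choose_succ_succ n (j'+1)
      have d1 : n.choose (j'+1) ≤ n.choose j' := choose_dec (by omega)
      have d2 : n.choose (j'+1+1) ≤ n.choose (j'+1) := choose_dec (by omega)
      omega
    · rw [Pset_empty_of_lt (by push_cast; push_cast at h; omega)]
      have := choose_inc (n := n+1) (k := j) (by omega)
      simp [Set.ncard_empty]
      omega
/-- A Dyck word: a sequence of up steps (+1) and down steps (-1) such that every
prefix sum is nonnegative and the total sum is 0. -/
def IsDyckWord (l : List ℤ) : Prop :=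
  (∀ x ∈ l, x = 1 ∨ x = -1) ∧ (∀ k : ℕ, 0 ≤ (l.take k).sum) ∧ l.sum = 0

/-- The number of returns to level 0: down steps after which the partial sum equals 0. -/
noncomputable def returnsToZero (l : List ℤ) : ℕ :=
  {i : ℕ | i < l.length ∧ l.getD i 0 = -1 ∧ (l.take (i + 1)).sum = 0}.ncard

/-- simplified return set -/
def RS (l : List ℤ) : Set ℕ := {i : ℕ | i < l.length ∧ (l.take (i + 1)).sum = 0}

lemma RS_finite (l : List ℤ) : (RS l).Finite :=
  (Set.finite_Iio l.length).subset (fun _ hi => hi.1)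

lemma ps_cons (x : ℤ) (l : List ℤ) (k : ℕ) :
    ((x :: l).take (k+1)).sum = x + (l.take k).sum := by
  rw [List.take_succ_cons, List.sum_cons]

lemma take_sum_take (l : List ℤ) (t k : ℕ) :
    ((l.take t).take k).sum = (l.take (min k t)).sum := by rw [List.take_take]

lemma take_sum_drop (l : List ℤ) (d k : ℕ) :
    ((l.drop d).take k).sum = (l.take (d + k)).sum - (l.take d).sum := by
  rw [List.take_add, List.sum_append]; ring

lemma take_drop_sum (l : List ℤ) (d : ℕ) : (l.take d).sum + (l.drop d).sum = l.sum := by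
  conv_rhs => rw [← List.take_append_drop d l]
  rw [List.sum_append]

lemma returns_eq_RS (l : List ℤ) (hx : ∀ x ∈ l, x = 1 ∨ x = -1)
    (hpre : ∀ k, 0 ≤ (l.take k).sum) : returnsToZero l = (RS l).ncard := by
  unfold returnsToZero
  congr 1
  ext i
  simp only [Set.mem_setOf_eq, RS]
  constructor
  · rintro ⟨h1, -, h3⟩; exact ⟨h1, h3⟩
  · rintro ⟨h1, h3⟩
    refine ⟨h1, ?_, h3⟩
    rw [List.getD_eq_getElem l 0 h1]
    have hstep : (l.take (i+1)).sum = (l.take i).sum + l[i] := take_sum_succ l h1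
    rcases hx l[i] (List.getElem_mem h1) with h4 | h4
    · exfalso
      have := hpre i
      rw [h4] at hstep
      omega
    · exact h4

lemma RS_card_le (l : List ℤ) (hx : ∀ x ∈ l, x = 1 ∨ x = -1) :
    (RS l).ncard ≤ l.length / 2 := by
  have hsub : RS l ⊆ (fun k => 2*k+1) '' Set.Iio (l.length / 2) := by
    rintro i ⟨h1, h2⟩
    have hpar := sum_parity (l.take (i+1)) (fun x hx' => hx x (List.mem_of_mem_take hx'))
    rw [h2, List.length_take] at hpar
    have hmin : min (i+1) l.length = i + 1 := by omega
    rw [hmin] at hpar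
    simp only [zero_add] at hpar
    have hpar' : 2 ∣ (i+1) := by exact_mod_cast hpar
    refine ⟨(i-1)/2, Set.mem_Iio.mpr (by omega), ?_⟩
    show 2*((i-1)/2)+1 = i
    omega
  calc (RS l).ncard ≤ ((fun k => 2*k+1) '' Set.Iio (l.length / 2)).ncard :=
        Set.ncard_le_ncard hsub ((Set.finite_Iio _).image _)
    _ = (Set.Iio (l.length / 2)).ncard :=
        Set.ncard_image_of_injective _ (fun a b hab => by omega)
    _ = l.length / 2 := by rw [← Finset.coe_range, Set.ncard_coe_finset, Finset.card_range]

/-- prefix sums of the composition `1 :: A ++ -1 :: r`. -/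
lemma C1_ps (a : ℕ) (A r : List ℤ) (hlen : A.length = 2*a) (hsum : A.sum = 0) (k : ℕ) :
    ((1 :: (A ++ -1 :: r)).take k).sum =
      if k = 0 then 0 else if k ≤ 2*a + 1 then 1 + (A.take (k-1)).sum
      else (r.take (k - (2*a+2))).sum := by
  cases k with
  | zero => simp
  | succ m =>
    rw [ps_cons, take_sum_append, hlen]
    by_cases hm : m ≤ 2*a
    · have h0 : m - 2*a = 0 := by omega
      rw [h0]
      simp only [List.take_zero, List.sum_nil, add_zero]
      rw [if_neg (by omega), if_pos (by omega)]
      simp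
    · have h1 : (A.take m).sum = A.sum := take_sum_of_le A (by omega)
      obtain ⟨c, hc⟩ : ∃ c, m - 2*a = c + 1 := ⟨m - 2*a - 1, by omega⟩
      rw [h1, hsum, hc, ps_cons]
      rw [if_neg (by omega), if_neg (by omega)]
      have h2 : m + 1 - (2*a+2) = c := by omega
      rw [h2]
      ring

lemma C1_main (a : ℕ) (A r : List ℤ) (hA : A ∈ Pset (2*a) a)
    (hx : ∀ x ∈ r, x = 1 ∨ x = -1) (hpre : ∀ k, 0 ≤ (r.take k).sum) :
    (1 :: (A ++ -1 :: r)).length = 2*a + 2 + r.length ∧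
    (∀ x ∈ (1 :: (A ++ -1 :: r)), x = 1 ∨ x = -1) ∧
    (∀ k, 0 ≤ ((1 :: (A ++ -1 :: r)).take k).sum) ∧
    (1 :: (A ++ -1 :: r)).sum = r.sum ∧
    returnsToZero (1 :: (A ++ -1 :: r)) = returnsToZero r + 1 ∧
    (∀ m, 0 < m → m ≤ 2*a + 1 → 0 < ((1 :: (A ++ -1 :: r)).take m).sum) ∧
    ((1 :: (A ++ -1 :: r)).take (2*a+2)).sum = 0 := by
  obtain ⟨hAlen, hAx, hApre, hAsum⟩ := hA
  have hAsum0 : A.sum = 0 := by rw [hAsum]; push_cast; ring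
  have hps := C1_ps a A r hAlen hAsum0
  have hlen : (1 :: (A ++ -1 :: r)).length = 2*a + 2 + r.length := by
    simp [hAlen]; omega
  have hx' : ∀ x ∈ (1 :: (A ++ -1 :: r)), x = 1 ∨ x = -1 := by
    intro x hx'
    rcases List.mem_cons.mp hx' with rfl | h1
    · left; rfl
    rcases List.mem_append.mp h1 with h2 | h2
    · exact hAx x h2
    rcases List.mem_cons.mp h2 with rfl | h3
    · right; rfl
    · exact hx x h3
  have hpre' : ∀ k, 0 ≤ ((1 :: (A ++ -1 :: r)).take k).sum := by
    intro k
    rw [hps k]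
    split_ifs with h1 h2
    · exact le_refl 0
    · linarith [hApre (k-1)]
    · exact hpre _
  have hsum' : (1 :: (A ++ -1 :: r)).sum = r.sum := by
    simp [List.sum_append, hAsum0]
  have hpos : ∀ m, 0 < m → m ≤ 2*a + 1 → 0 < ((1 :: (A ++ -1 :: r)).take m).sum := by
    intro m h1 h2
    rw [hps m, if_neg (by omega), if_pos h2]
    linarith [hApre (m-1)]
  have hz : ((1 :: (A ++ -1 :: r)).take (2*a+2)).sum = 0 := by
    rw [hps, if_neg (by omega), if_neg (by omega)]
    simp
  have hRS : RS (1 :: (A ++ -1 :: r)) = insert (2*a+1) ((fun i => i + (2*a+2)) '' RS r) := by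
    ext i
    simp only [RS, Set.mem_setOf_eq, Set.mem_insert_iff, Set.mem_image, hlen]
    constructor
    · rintro ⟨h1, h2⟩
      rw [hps, if_neg (by omega)] at h2
      by_cases h3 : i + 1 ≤ 2*a+1
      · rw [if_pos h3] at h2
        simp only [Nat.add_sub_cancel] at h2
        exfalso; linarith [hApre i]
      · rw [if_neg h3] at h2
        by_cases h4 : i = 2*a+1
        · left; exact h4
        · right
          refine ⟨i - (2*a+2), ⟨by omega, ?_⟩, by omega⟩
          have h5 : i + 1 - (2*a+2) = (i - (2*a+2)) + 1 := by omega
          rw [h5] at h2; exact h2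
    · rintro (rfl | ⟨i', ⟨h1, h2⟩, rfl⟩)
      · refine ⟨by omega, ?_⟩
        rw [hps, if_neg (by omega), if_neg (by omega)]
        have h5 : 2*a+1+1 - (2*a+2) = 0 := by omega
        rw [h5]; simp
      · refine ⟨by omega, ?_⟩
        rw [hps, if_neg (by omega), if_neg (by omega)]
        have h5 : i' + (2*a+2) + 1 - (2*a+2) = i' + 1 := by omega
        rw [h5]; exact h2
  have hret : returnsToZero (1 :: (A ++ -1 :: r)) = returnsToZero r + 1 := by
    rw [returns_eq_RS _ hx' hpre', returns_eq_RS r hx hpre, hRS]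
    rw [Set.ncard_insert_of_notMem (by rintro ⟨i', -, h⟩; simp only at h; omega) ((RS_finite r).image _),
      Set.ncard_image_of_injective _ (add_left_injective _)]
  exact ⟨hlen, hx', hpre', hsum', hret, hpos, hz⟩
def Sset (u p : ℕ) : Set (List ℤ) :=
  {l : List ℤ | l.length = 2 * u ∧ IsDyckWord l ∧ returnsToZero l = p}

lemma Sset_finite (u p : ℕ) : (Sset u p).Finite :=
  (finite_steps (2*u)).subset (fun _ hl => ⟨hl.1, hl.2.1.1⟩)

/-- first-return decomposition of a Dyck word with `p ≥ 1` returns -/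
lemma D1 {u p : ℕ} (hp : 1 ≤ p) (hpu : p ≤ u) {l : List ℤ} (hl : l ∈ Sset u p) :
    ∃ a ≤ u - p, ∃ A ∈ Pset (2*a) a, ∃ r ∈ Sset (u - a - 1) (p - 1),
      l = 1 :: (A ++ -1 :: r) := by
  obtain ⟨hlen, ⟨hx, hpre, hsum⟩, hret⟩ := hl
  have hu1 : 1 ≤ u := le_trans hp hpu
  have hRne : (RS l).Nonempty := by
    refine ⟨2*u - 1, by rw [hlen]; omega, ?_⟩
    have h1 : 2*u - 1 + 1 = 2*u := by omega
    rw [h1, ← hlen, take_sum_of_le l le_rfl, hsum]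
  set t := sInf (RS l) with htdef
  obtain ⟨htlt, htz⟩ : t ∈ RS l := Nat.sInf_mem hRne
  have hzf : ∀ m, 0 < m → m ≤ t → 0 < (l.take m).sum := by
    intro m h1 h2
    rcases lt_or_eq_of_le (hpre m) with h3 | h3
    · exact h3
    · exfalso
      have h4 : m - 1 ∈ RS l := by
        refine ⟨by omega, ?_⟩
        rw [show m - 1 + 1 = m by omega]
        exact h3.symm
      have := Nat.sInf_le h4
      omega
  have hpar : 2 ∣ (t + 1) := by
    have h1 := sum_parity (l.take (t+1)) (fun x hx' => hx x (List.mem_of_mem_take hx'))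
    rw [htz, List.length_take] at h1
    rw [show min (t+1) l.length = t+1 by omega] at h1
    simp only [zero_add] at h1
    exact_mod_cast h1
  obtain ⟨a, ha⟩ : ∃ a, t = 2*a + 1 := ⟨(t-1)/2, by omega⟩
  obtain ⟨x, l', rfl⟩ : ∃ x l', l = x :: l' := by
    cases l with
    | nil => exfalso; rw [List.length_nil] at hlen; omega
    | cons x l' => exact ⟨x, l', rfl⟩
  have hlen' : l'.length = 2*u - 1 := by
    rw [List.length_cons] at hlen; omega
  have hx1 : x = 1 := by
    have h1 := hzf 1 one_pos (by omega)
    rw [show (1:ℕ) = 0 + 1 from rfl, ps_cons] at h1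
    simp only [List.take_zero, List.sum_nil, add_zero] at h1
    rcases hx x (by simp) with h | h
    · exact h
    · exfalso; omega
  subst hx1
  have hps' : ∀ k, ((1 :: l').take (k+1)).sum = 1 + (l'.take k).sum := fun k => ps_cons 1 l' k
  have h2a1 : (l'.take (2*a+1)).sum = -1 := by
    rw [ha] at htz
    rw [show 2*a+1+1 = (2*a+1)+1 from rfl, hps'] at htz
    omega
  have h2alt : 2*a < l'.length := by
    rw [List.length_cons] at htlt; omega
  have hstep : (l'.take (2*a+1)).sum = (l'.take (2*a)).sum + l'[2*a] := take_sum_succ l' h2alt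
  have hgetmem : l'[2*a] ∈ (1 :: l') := List.mem_cons_of_mem 1 (List.getElem_mem h2alt)
  have h2a0 : (l'.take (2*a)).sum = 0 ∧ l'[2*a] = -1 := by
    have h1 := hzf t (by omega) le_rfl
    rw [ha, hps'] at h1
    rcases hx _ hgetmem with h | h
    · exfalso; rw [h] at hstep; omega
    · rw [h] at hstep; exact ⟨by omega, h⟩
  have hsplit : l' = l'.take (2*a) ++ -1 :: l'.drop (2*a+1) := by
    conv_lhs => rw [← List.take_append_drop (2*a) l']
    rw [List.drop_eq_getElem_cons h2alt, h2a0.2]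
  have hAmem : l'.take (2*a) ∈ Pset (2*a) a := by
    refine ⟨by rw [List.length_take]; omega,
      fun y hy => hx y (List.mem_cons_of_mem 1 (List.mem_of_mem_take hy)), ?_, ?_⟩
    · intro k
      rw [take_sum_take]
      rcases Nat.eq_zero_or_pos (min k (2*a)) with h1 | h1
      · rw [h1]; simp
      · have h2 := hzf (min k (2*a) + 1) (by omega) (by omega)
        rw [hps'] at h2
        linarith
    · rw [h2a0.1]; push_cast; ring
  have hrx : ∀ y ∈ l'.drop (2*a+1), y = 1 ∨ y = -1 :=
    fun y hy => hx y (List.mem_cons_of_mem 1 (List.mem_of_mem_drop hy))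
  have hrpre : ∀ k, 0 ≤ ((l'.drop (2*a+1)).take k).sum := by
    intro k
    rw [take_sum_drop, h2a1]
    have h1 := hpre (2*a+1+k+1)
    rw [hps'] at h1
    linarith
  have hl'sum : l'.sum = -1 := by
    rw [List.sum_cons] at hsum
    linarith
  have hrsum : (l'.drop (2*a+1)).sum = 0 := by
    have h1 := take_drop_sum l' (2*a+1)
    rw [h2a1, hl'sum] at h1
    linarith
  have hrlen : (l'.drop (2*a+1)).length = 2*(u - a - 1) := by
    rw [List.length_drop]; omega
  have hC := C1_main a _ _ hAmem hrx hrpre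
  have hform : (1 : ℤ) :: l' = 1 :: (l'.take (2*a) ++ -1 :: l'.drop (2*a+1)) := by
    conv_lhs => rw [hsplit]
  have hretr : returnsToZero (l'.drop (2*a+1)) = p - 1 := by
    have h1 := hC.2.2.2.2.1
    rw [← hform] at h1
    omega
  have hale : a ≤ u - p := by
    have h1 := RS_card_le (l'.drop (2*a+1)) hrx
    rw [← returns_eq_RS _ hrx hrpre, hretr, hrlen] at h1
    omega
  exact ⟨a, hale, l'.take (2*a), hAmem, l'.drop (2*a+1),
    ⟨hrlen, ⟨hrx, hrpre, hrsum⟩, hretr⟩, hform⟩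

def SB (u p a : ℕ) : Set (List ℤ) :=
  (fun q : List ℤ × List ℤ => 1 :: (q.1 ++ -1 :: q.2)) ''
    ((Pset (2*a) a) ×ˢ (Sset (u - a - 1) (p - 1)))

lemma SB_sub {u p a : ℕ} (hp : 1 ≤ p) (ha : a ≤ u - p) (hpu : p ≤ u) :
    SB u p a ⊆ Sset u p := by
  rintro - ⟨⟨A, r⟩, ⟨hA, hr⟩, rfl⟩
  obtain ⟨hrlen, ⟨hrx, hrpre, hrsum⟩, hrret⟩ := hr
  obtain ⟨h1, h2, h3, h4, h5, -, -⟩ := C1_main a A r hA hrx hrpre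
  exact ⟨by rw [h1, hrlen]; omega, ⟨h2, h3, by rw [h4, hrsum]⟩, by rw [h5, hrret]; omega⟩

lemma SB_pos {u p a : ℕ} {l : List ℤ} (hl : l ∈ SB u p a) :
    (l.take (2*a+2)).sum = 0 ∧ ∀ m, 0 < m → m ≤ 2*a+1 → 0 < (l.take m).sum := by
  obtain ⟨⟨A, r⟩, ⟨hA, hr⟩, rfl⟩ := hl
  obtain ⟨-, -, -, -, -, h6, h7⟩ := C1_main a A r hA hr.2.1.1 hr.2.1.2.1
  exact ⟨h7, h6⟩

lemma SB_disj {u p a b : ℕ} (hab : a ≠ b) : Disjoint (SB u p a) (SB u p b) := by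
  rw [Set.disjoint_left]
  intro l hla hlb
  obtain ⟨hz1, hp1⟩ := SB_pos hla
  obtain ⟨hz2, hp2⟩ := SB_pos hlb
  rcases Nat.lt_or_ge a b with h | h
  · have h1 := hp2 (2*a+2) (by omega) (by omega)
    rw [hz1] at h1
    exact lt_irrefl 0 h1
  · have h1 := hp1 (2*b+2) (by omega) (by omega)
    rw [hz2] at h1
    exact lt_irrefl 0 h1

lemma ncard_biUnion {ι : Type} [DecidableEq ι] (K : Finset ι) (f : ι → Set (List ℤ))
    (hfin : ∀ i ∈ K, (f i).Finite)
    (hdisj : ∀ i ∈ K, ∀ j ∈ K, i ≠ j → Disjoint (f i) (f j)) :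
    (⋃ i ∈ K, f i).ncard = ∑ i ∈ K, (f i).ncard := by
  induction K using Finset.induction_on with
  | empty => simp
  | @insert i s hi ih =>
    rw [Finset.sum_insert hi, Finset.set_biUnion_insert _ _ _]
    have hfin2 : (⋃ j ∈ s, f j).Finite :=
      Set.Finite.biUnion s.finite_toSet (fun j hj => hfin j (Finset.mem_insert_of_mem hj))
    have hd : Disjoint (f i) (⋃ j ∈ s, f j) := by
      rw [Set.disjoint_iUnion_right]
      intro j
      rw [Set.disjoint_iUnion_right]
      intro hj
      exact hdisj i (Finset.mem_insert_self i s) j (Finset.mem_insert_of_mem hj)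
        (by rintro rfl; exact hi hj)
    rw [Set.ncard_union_eq hd (hfin i (Finset.mem_insert_self i s)) hfin2,
      ih (fun j hj => hfin j (Finset.mem_insert_of_mem hj))
        (fun j hj k hk => hdisj j (Finset.mem_insert_of_mem hj) k (Finset.mem_insert_of_mem hk))]

lemma SB_ncard (u p a : ℕ) :
    (SB u p a).ncard = (Pset (2*a) a).ncard * (Sset (u - a - 1) (p - 1)).ncard := by
  rw [SB, Set.ncard_image_of_injOn, ncard_sprod]
  rintro ⟨A, r⟩ ⟨hA, -⟩ ⟨A', r'⟩ ⟨hA', -⟩ heq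
  simp only at heq
  injection heq with h1 h2
  obtain ⟨h3, h4⟩ := List.append_inj h2 (by rw [hA.1, hA'.1])
  injection h4 with h5 h6
  simp [h3, h6]

lemma SUM1 (u p : ℕ) (hp : 1 ≤ p) (hpu : p ≤ u) :
    (Sset u p).ncard =
      ∑ a ∈ Finset.range (u - p + 1), (Pset (2*a) a).ncard * (Sset (u - a - 1) (p - 1)).ncard := by
  have hcov : Sset u p = ⋃ a ∈ Finset.range (u - p + 1), SB u p a := by
    ext l
    simp only [Set.mem_iUnion, Finset.mem_range]
    constructor
    · intro hl
      obtain ⟨a, ha, A, hA, r, hr, rfl⟩ := D1 hp hpu hl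
      exact ⟨a, by omega, ⟨(A, r), ⟨hA, hr⟩, rfl⟩⟩
    · rintro ⟨a, ha, hl⟩
      exact SB_sub hp (by omega) hpu hl
  rw [hcov, ncard_biUnion (Finset.range (u - p + 1)) (SB u p)
    (fun a _ => ((Pset_finite (2*a) a).prod (Sset_finite _ _)).image _)
    (fun a _ b _ hab => SB_disj hab)]
  exact Finset.sum_congr rfl (fun a _ => SB_ncard u p a)
lemma Pset_empty_of_gt {n j : ℕ} (h : (n:ℤ) < 2*(j:ℤ) - n) : Pset n j = ∅ := by
  ext l
  simp only [Pset, Set.mem_setOf_eq, Set.mem_empty_iff_false, iff_false]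
  rintro ⟨hlen, hx, -, hsum⟩
  have h1 := sum_le_len l hx
  rw [hsum, hlen] at h1
  omega

lemma C2_ps (a : ℕ) (A r : List ℤ) (hlen : A.length = 2*a) (hsum : A.sum = 0) (k : ℕ) :
    ((A ++ 1 :: r).take k).sum =
      if k ≤ 2*a then (A.take k).sum else 1 + (r.take (k - (2*a+1))).sum := by
  rw [take_sum_append, hlen]
  by_cases hk : k ≤ 2*a
  · rw [if_pos hk, show k - 2*a = 0 by omega]
    simp
  · rw [if_neg hk, take_sum_of_le A (by omega)]
    obtain ⟨c, hc⟩ : ∃ c, k - 2*a = c + 1 := ⟨k - 2*a - 1, by omega⟩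
    rw [hc, ps_cons, hsum, show k - (2*a+1) = c by omega]
    ring

lemma C2_main {a n' j' : ℕ} {A r : List ℤ} (hA : A ∈ Pset (2*a) a) (hr : r ∈ Pset n' j') :
    A ++ 1 :: r ∈ Pset (2*a + 1 + n') (a + 1 + j') ∧
    ((A ++ 1 :: r).take (2*a)).sum = 0 ∧
    (∀ m, 2*a < m → 0 < ((A ++ 1 :: r).take m).sum) := by
  obtain ⟨hAlen, hAx, hApre, hAsum⟩ := hA
  obtain ⟨hrlen, hrx, hrpre, hrsum⟩ := hr
  have hAsum0 : A.sum = 0 := by rw [hAsum]; push_cast; ring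
  have hps := C2_ps a A r hAlen hAsum0
  have hrsum' : ∀ k, n' ≤ k → (r.take k).sum = 2*(j':ℤ) - n' := by
    intro k hk
    rw [take_sum_of_le r (by omega), hrsum]
  have hrge : (0:ℤ) ≤ 2*(j':ℤ) - n' := by
    have := hrpre n'
    rw [hrsum' n' le_rfl] at this
    exact this
  refine ⟨⟨?_, ?_, ?_, ?_⟩, ?_, ?_⟩
  · simp [hAlen, hrlen]; omega
  · intro x hx'
    rcases List.mem_append.mp hx' with h1 | h1
    · exact hAx x h1
    rcases List.mem_cons.mp h1 with rfl | h2
    · left; rfl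
    · exact hrx x h2
  · intro k
    rw [hps k]
    split_ifs with h1
    · exact hApre k
    · linarith [hrpre (k - (2*a+1))]
  · rw [List.sum_append, List.sum_cons, hAsum0, hrsum]
    push_cast; ring
  · rw [hps, if_pos le_rfl]
    rw [take_sum_of_le A (by omega), hAsum0]
  · intro m hm
    rw [hps, if_neg (by omega)]
    linarith [hrpre (m - (2*a+1))]

/-- last-zero decomposition of a nonnegative path with positive endpoint -/
lemma D2 {n j : ℕ} (hge : n + 1 ≤ 2*j) {l : List ℤ} (hl : l ∈ Pset n j) :
    ∃ a, 2*a + 1 ≤ n ∧ a + 1 ≤ j ∧ ∃ A ∈ Pset (2*a) a, ∃ r ∈ Pset (n - (2*a+1)) (j - (a+1)),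
      l = A ++ 1 :: r := by
  obtain ⟨hlen, hx, hpre, hsum⟩ := hl
  set t := Nat.findGreatest (fun m => (l.take m).sum = 0) n with htdef
  have ht0 : (l.take t).sum = 0 := by
    have := Nat.findGreatest_spec (P := fun m => (l.take m).sum = 0) (Nat.zero_le n) (by simp)
    exact this
  have hgt : ∀ m, t < m → m ≤ n → (l.take m).sum ≠ 0 :=
    fun m h1 h2 => Nat.findGreatest_is_greatest h1 h2
  have htle : t ≤ n := Nat.findGreatest_le n
  have hsumpos : (0:ℤ) < 2*(j:ℤ) - n := by
    have : (n:ℤ) + 1 ≤ 2*j := by exact_mod_cast hge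
    linarith
  have hposgt : ∀ m, t < m → 0 < (l.take m).sum := by
    intro m h1
    rcases le_or_gt m n with h2 | h2
    · rcases lt_or_eq_of_le (hpre m) with h3 | h3
      · exact h3
      · exact absurd h3.symm (hgt m h1 h2)
    · rw [take_sum_of_le l (by omega), hsum]
      exact hsumpos
  clear_value t
  have htn : t < n := by
    rcases lt_or_eq_of_le htle with h | h
    · exact h
    · exfalso
      rw [h, ← hlen, take_sum_of_le l le_rfl, hsum] at ht0
      omega
  have hpar : 2 ∣ t := by
    have h1 := sum_parity (l.take t) (fun x hx' => hx x (List.mem_of_mem_take hx'))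
    rw [ht0, List.length_take, show min t l.length = t by omega] at h1
    simp only [zero_add] at h1
    exact_mod_cast h1
  obtain ⟨a, rfl⟩ : ∃ a, t = 2*a := ⟨t/2, by omega⟩
  have h2alt : 2*a < l.length := by omega
  have hstep : (l.take (2*a+1)).sum = (l.take (2*a)).sum + l[2*a] := take_sum_succ l h2alt
  have hget : l[2*a] = 1 := by
    have h1 := hposgt (2*a+1) (by omega)
    rcases hx _ (List.getElem_mem h2alt) with h | h
    · exact h
    · exfalso; rw [h, ht0] at hstep; omega
  have hps1 : (l.take (2*a+1)).sum = 1 := by rw [hstep, ht0, hget]; ring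
  have hAmem : l.take (2*a) ∈ Pset (2*a) a := by
    refine ⟨by rw [List.length_take]; omega,
      fun y hy => hx y (List.mem_of_mem_take hy), ?_, ?_⟩
    · intro k
      rw [take_sum_take]
      exact hpre _
    · rw [ht0]; push_cast; ring
  have haj : a + 1 ≤ j := by omega
  have hrmem : l.drop (2*a+1) ∈ Pset (n - (2*a+1)) (j - (a+1)) := by
    refine ⟨by rw [List.length_drop, hlen],
      fun y hy => hx y (List.mem_of_mem_drop hy), ?_, ?_⟩
    · intro k
      rw [take_sum_drop, hps1]
      have h1 := hposgt (2*a+1+k) (by omega)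
      linarith
    · have h1 := take_drop_sum l (2*a+1)
      rw [hps1, hsum] at h1
      have h2 : ((j - (a+1) : ℕ) : ℤ) = (j:ℤ) - (a+1) := by push_cast [haj]; ring
      have h3 : ((n - (2*a+1) : ℕ) : ℤ) = (n:ℤ) - (2*a+1) := by push_cast [show 2*a+1 ≤ n by omega]; ring
      rw [h2, h3]
      linarith
  refine ⟨a, by omega, haj, l.take (2*a), hAmem, l.drop (2*a+1), hrmem, ?_⟩
  conv_lhs => rw [← List.take_append_drop (2*a) l]
  rw [List.drop_eq_getElem_cons h2alt, hget]

def PB (n j a : ℕ) : Set (List ℤ) :=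
  (fun q : List ℤ × List ℤ => q.1 ++ 1 :: q.2) ''
    ((Pset (2*a) a) ×ˢ (Pset (n - (2*a+1)) (j - (a+1))))

lemma PB_sub {n j a : ℕ} (h1 : 2*a + 1 ≤ n) (h2 : a + 1 ≤ j) : PB n j a ⊆ Pset n j := by
  rintro - ⟨⟨A, r⟩, ⟨hA, hr⟩, rfl⟩
  have h3 := (C2_main hA hr).1
  rw [show 2*a + 1 + (n - (2*a+1)) = n by omega, show a + 1 + (j - (a+1)) = j by omega] at h3
  exact h3

lemma PB_pos {n j a : ℕ} {l : List ℤ} (hl : l ∈ PB n j a) :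
    (l.take (2*a)).sum = 0 ∧ ∀ m, 2*a < m → 0 < (l.take m).sum := by
  obtain ⟨⟨A, r⟩, ⟨hA, hr⟩, rfl⟩ := hl
  exact (C2_main hA hr).2

lemma PB_disj {n j a b : ℕ} (hab : a ≠ b) : Disjoint (PB n j a) (PB n j b) := by
  rw [Set.disjoint_left]
  intro l hla hlb
  obtain ⟨hz1, hp1⟩ := PB_pos hla
  obtain ⟨hz2, hp2⟩ := PB_pos hlb
  rcases Nat.lt_or_ge a b with h | h
  · have h1 := hp1 (2*b) (by omega)
    rw [hz2] at h1
    exact lt_irrefl 0 h1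
  · have h1 := hp2 (2*a) (by omega)
    rw [hz1] at h1
    exact lt_irrefl 0 h1

lemma PB_ncard (n j a : ℕ) :
    (PB n j a).ncard = (Pset (2*a) a).ncard * (Pset (n - (2*a+1)) (j - (a+1))).ncard := by
  rw [PB, Set.ncard_image_of_injOn, ncard_sprod]
  rintro ⟨A, r⟩ ⟨hA, -⟩ ⟨A', r'⟩ ⟨hA', -⟩ heq
  simp only at heq
  obtain ⟨h3, h4⟩ := List.append_inj heq (by rw [hA.1, hA'.1])
  injection h4 with h5 h6
  simp [h3, h6]

lemma SUM2 {n j : ℕ} (hge : n + 1 ≤ 2*j) :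
    (Pset n j).ncard =
      ∑ a ∈ Finset.range ((n+1)/2),
        (Pset (2*a) a).ncard * (Pset (n - (2*a+1)) (j - (a+1))).ncard := by
  have hcov : Pset n j = ⋃ a ∈ Finset.range ((n+1)/2), PB n j a := by
    ext l
    simp only [Set.mem_iUnion, Finset.mem_range]
    constructor
    · intro hl
      obtain ⟨a, h1, h2, A, hA, r, hr, rfl⟩ := D2 hge hl
      exact ⟨a, by omega, ⟨(A, r), ⟨hA, hr⟩, rfl⟩⟩
    · rintro ⟨a, ha, hl⟩
      exact PB_sub (by omega) (by omega) hl
  rw [hcov, ncard_biUnion (Finset.range ((n+1)/2)) (PB n j)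
    (fun a _ => ((Pset_finite (2*a) a).prod (Pset_finite _ _)).image _)
    (fun a _ b _ hab => PB_disj hab)]
  exact Finset.sum_congr rfl (fun a _ => PB_ncard n j a)
lemma Sset_zero_zero : Sset 0 0 = {([] : List ℤ)} := by
  ext l
  simp only [Sset, Set.mem_setOf_eq, Set.mem_singleton_iff]
  constructor
  · rintro ⟨hlen, -, -⟩
    exact List.length_eq_zero_iff.mp (by omega)
  · rintro rfl
    refine ⟨rfl, ⟨by simp, by simp, rfl⟩, ?_⟩
    unfold returnsToZero
    convert Set.ncard_empty ℕ using 2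
    ext i
    simp

lemma Sset_zero_empty {m : ℕ} (hm : 1 ≤ m) : Sset m 0 = ∅ := by
  ext l
  simp only [Sset, Set.mem_setOf_eq, Set.mem_empty_iff_false, iff_false]
  rintro ⟨hlen, ⟨hx, hpre, hsum⟩, hret⟩
  rw [returns_eq_RS l hx hpre] at hret
  have hmem : 2*m - 1 ∈ RS l := by
    refine ⟨by omega, ?_⟩
    rw [show 2*m-1+1 = 2*m by omega, ← hlen, take_sum_of_le l le_rfl, hsum]
  exact Set.ncard_ne_zero_of_mem hmem (RS_finite l) hret

lemma key : ∀ p, 1 ≤ p → ∀ u, p ≤ u →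
    (Sset u p).ncard = (Pset (2*u - p - 1) (u - 1)).ncard := by
  intro p
  induction p with
  | zero => intro h; exact absurd h (by omega)
  | succ p ih =>
    intro _ u hpu
    rcases Nat.eq_zero_or_pos p with rfl | hp1
    · have hu : 1 ≤ u := hpu
      rw [SUM1 u 1 le_rfl hpu]
      rw [Finset.sum_eq_single (u-1)]
      · rw [show u - (u-1) - 1 = 0 by omega]
        norm_num
        rw [Sset_zero_zero, Set.ncard_singleton, mul_one,
          show 2*(u-1) = 2*u - 1 - 1 by omega]
      · intro a ha hne
        simp only [Finset.mem_range] at ha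
        rw [show (1:ℕ) - 1 = 0 from rfl, Sset_zero_empty (m := u - a - 1) (by omega)]
        simp
      · intro h
        exact absurd (Finset.mem_range.mpr (by omega)) h
    · have hu : p + 1 ≤ u := hpu
      rw [SUM1 u (p+1) (by omega) hpu]
      have hge : (2*u - (p+1) - 1) + 1 ≤ 2*(u-1) := by omega
      rw [SUM2 hge]
      have hshrink : ∑ a ∈ Finset.range ((2*u - (p+1) - 1 + 1)/2),
            (Pset (2*a) a).ncard * (Pset (2*u - (p+1) - 1 - (2*a+1)) (u - 1 - (a+1))).ncard
          = ∑ a ∈ Finset.range (u - (p+1) + 1),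
            (Pset (2*a) a).ncard * (Pset (2*u - (p+1) - 1 - (2*a+1)) (u - 1 - (a+1))).ncard := by
        refine (Finset.sum_subset ?_ ?_).symm
        · intro a ha; simp only [Finset.mem_range] at *; omega
        · intro a ha hna
          simp only [Finset.mem_range] at ha hna
          have he : Pset (2*u - (p+1) - 1 - (2*a+1)) (u - 1 - (a+1)) = ∅ :=
            Pset_empty_of_gt (by omega)
          rw [he]
          simp
      rw [hshrink]
      refine Finset.sum_congr rfl (fun a ha => ?_)
      simp only [Finset.mem_range] at ha
      simp only [Nat.add_sub_cancel]
      have h1 := ih hp1 (u - a - 1) (by omega)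
      rw [h1, show 2*(u-a-1) - p - 1 = 2*u - (p+1) - 1 - (2*a+1) by omega,
        show u - a - 1 - 1 = u - 1 - (a+1) by omega]

theorem stmt6 (u p : ℕ) (hp : 1 ≤ p) (hpu : p ≤ u) :
    (({l : List ℤ | l.length = 2 * u ∧ IsDyckWord l ∧ returnsToZero l = p}.ncard : ℝ))
      = ((p : ℝ) / (u : ℝ)) * (Nat.choose (2 * u - p - 1) (u - 1) : ℝ) := by
  have hu1 : 1 ≤ u := le_trans hp hpu
  have hkey := key p hp u hpu
  have hS : {l : List ℤ | l.length = 2 * u ∧ IsDyckWord l ∧ returnsToZero l = p} = Sset u p := rfl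
  rw [hS, hkey, Pset_ncard, show u - 1 + 1 = u by omega]
  have hle : (2*u-p-1).choose u ≤ (2*u-p-1).choose (u-1) := by
    have h1 := choose_dec (n := 2*u-p-1) (k := u-1) (by omega)
    rwa [show u - 1 + 1 = u by omega] at h1
  rw [Nat.cast_sub hle]
  have hid : (2*u-p-1).choose u * u = (2*u-p-1).choose (u-1) * (u - p) := by
    have h1 := Nat.choose_succ_right_eq (2*u-p-1) (u-1)
    rwa [show u - 1 + 1 = u by omega, show 2*u-p-1 - (u-1) = u - p by omega] at h1
  have hidR : ((2*u-p-1).choose u : ℝ) * u = ((2*u-p-1).choose (u-1) : ℝ) * ((u:ℝ) - p) := by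
    have h2 := congrArg (Nat.cast : ℕ → ℝ) hid
    push_cast [hpu] at h2
    exact h2
  have hune : (u:ℝ) ≠ 0 := Nat.cast_ne_zero.mpr (by omega)
  field_simp
  linarith [hidR]
end

section
/- For integers n ≥ 1, u ≥ 1 and r₀ ≥ 0 with 2u + r₀ ≤ n, the number of Motzkin paths of size n having exactly u up steps and exactly r₀ horizontal steps at level 0 equals ((r₀+1)/(n+1))·binom(n+1,u)·binom(n−r₀−u−1,u−1). -/
/-- A Motzkin path: a sequence of up steps (+1), down steps (-1) and horizontal steps (0)
such that every prefix sum is nonnegative and the total sum is 0. -/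
def IsMotzkinPath (l : List ℤ) : Prop :=
  (∀ x ∈ l, x = 1 ∨ x = -1 ∨ x = 0) ∧ (∀ k : ℕ, 0 ≤ (l.take k).sum) ∧ l.sum = 0

/-- The number of horizontal steps at level 0: steps equal to 0 such that the sum of the
preceding steps is 0. -/
noncomputable def hZeroSteps (l : List ℤ) : ℕ :=
  {i : ℕ | i < l.length ∧ l.getD i 1 = 0 ∧ (l.take i).sum = 0}.ncard

/-
Count more generally the prefixes of Motzkin paths with `a ≥ 1` up steps, `b ≤ a` down steps and
`r` horizontal steps at level 0. Deleting the horizontal steps of such a prefix leaves an up/down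
ballot path, say with `q` returns to level 0; the `r` horizontal steps at level 0 sit at its `q + 1`
vertices at level 0 and the other ones at its `a + b - q` vertices above level 0. This gives the
sum `countFormula`, which we identify with the number of prefixes by checking that both satisfy
the recursion obtained by removing the last step.

On the diagonal `a = b = u`, trinomial revision turns the `q`-th summand into
`(r + 1) / u * C(n - r - u - 1, u - 1) * C(r + q, r + 1) * C(n - r - 1 - q, u - q)`, and the
remaining sum over `q` is a Chu–Vandermonde convolution, equal to
`C(n, u - 1) = u / (n + 1) * C(n + 1, u)`.
-/

open Finset

namespace Motzkin

lemma sum_eq_count_sub_count {l : List ℤ} (hl : ∀ x ∈ l, x = 1 ∨ x = -1 ∨ x = 0) :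
    l.sum = l.count 1 - l.count (-1) := by
  induction l with
  | nil => simp
  | cons y t ih =>
    rw [List.forall_mem_cons] at hl
    rcases hl.1 with rfl | rfl | rfl <;> simp [ih hl.2] <;> ring

lemma hZeroSteps_eq_card (l : List ℤ) :
    hZeroSteps l = #{i ∈ range l.length | l.getD i 1 = 0 ∧ (l.take i).sum = 0} := by
  rw [hZeroSteps, ← Set.ncard_coe_finset]
  congr 1
  ext i
  simp

lemma hZeroSteps_append_singleton (l : List ℤ) (x : ℤ) :
    hZeroSteps (l ++ [x]) = hZeroSteps l + if x = 0 ∧ l.sum = 0 then 1 else 0 := by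
  rw [hZeroSteps_eq_card, hZeroSteps_eq_card, List.length_append, List.length_singleton,
    range_add_one, filter_insert]
  have hlast : ((l ++ [x]).getD l.length 1 = 0 ∧ ((l ++ [x]).take l.length).sum = 0) ↔
      x = 0 ∧ l.sum = 0 := by
    simp [List.getD_eq_getElem?_getD]
  have hinit : {i ∈ range l.length | (l ++ [x]).getD i 1 = 0 ∧ ((l ++ [x]).take i).sum = 0} =
      {i ∈ range l.length | l.getD i 1 = 0 ∧ (l.take i).sum = 0} := by
    refine filter_congr fun i hi => ?_
    rw [mem_range] at hi
    rw [List.getD_eq_getElem?_getD, List.getD_eq_getElem?_getD, List.getElem?_append_left hi,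
      List.take_append_of_le_length hi.le]
  by_cases h : x = 0 ∧ l.sum = 0
  · rw [if_pos h, if_pos (hlast.2 h), hinit, card_insert_of_notMem (by simp)]
  · rw [if_neg h, if_neg (mt hlast.1 h), hinit, add_zero]

lemma hZeroSteps_replicate_zero (n : ℕ) : hZeroSteps (List.replicate n 0) = n := by
  induction n with
  | zero => simp [hZeroSteps]
  | succ n ih => simp [List.replicate_succ', hZeroSteps_append_singleton, ih]

lemma finite_setOf_length_eq_forall_mem {α : Type*} {s : Set α} (hs : s.Finite) (n : ℕ) :
    {l : List α | l.length = n ∧ ∀ x ∈ l, x ∈ s}.Finite := by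
  have := hs.to_subtype
  refine ((List.finite_length_eq s n).image (List.map (↑))).subset ?_
  rintro l ⟨hn, hl⟩
  lift l to List s using hl
  exact ⟨l, by simpa using hn, rfl⟩

lemma ncard_eq_ncard_preimage_append_add {α : Type*} {S : Set (List α)} (hS : S.Finite)
    {x y z : α} (hxy : x ≠ y) (hxz : x ≠ z) (hyz : y ≠ z)
    (hlast : ∀ l ∈ S, ∃ t, l = t ++ [x] ∨ l = t ++ [y] ∨ l = t ++ [z]) :
    S.ncard =
      {t | t ++ [x] ∈ S}.ncard + {t | t ++ [y] ∈ S}.ncard + {t | t ++ [z] ∈ S}.ncard := by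
  have hinj (w : α) : Function.Injective (· ++ [w]) := fun _ _ h => List.append_cancel_right h
  have hfin (w : α) : {t | t ++ [w] ∈ S}.Finite := hS.preimage (hinj w).injOn
  have hdisj : ∀ {v w : α}, v ≠ w → ∀ A B : Set (List α),
      Disjoint ((· ++ [v]) '' A) ((· ++ [w]) '' B) := by
    rintro v w hvw A B
    rw [Set.disjoint_left]
    rintro _ ⟨s, -, rfl⟩ ⟨t, -, h⟩
    exact hvw (List.singleton_inj.1 (List.append_inj' h rfl).2).symm
  have hsplit : S = (· ++ [x]) '' {t | t ++ [x] ∈ S} ∪ (· ++ [y]) '' {t | t ++ [y] ∈ S} ∪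
      (· ++ [z]) '' {t | t ++ [z] ∈ S} := by
    ext l
    constructor
    · intro hl
      obtain ⟨t, rfl | rfl | rfl⟩ := hlast l hl
      · exact Or.inl (Or.inl ⟨t, hl, rfl⟩)
      · exact Or.inl (Or.inr ⟨t, hl, rfl⟩)
      · exact Or.inr ⟨t, hl, rfl⟩
    · rintro ((⟨t, ht, rfl⟩ | ⟨t, ht, rfl⟩) | ⟨t, ht, rfl⟩) <;> exact ht
  conv_lhs => rw [hsplit]
  rw [Set.ncard_union_eq (Set.disjoint_union_left.2 ⟨hdisj hxz _ _, hdisj hyz _ _⟩)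
      (((hfin x).image _).union ((hfin y).image _)) ((hfin z).image _),
    Set.ncard_union_eq (hdisj hxy _ _) ((hfin x).image _) ((hfin y).image _),
    Set.ncard_image_of_injective _ (hinj x), Set.ncard_image_of_injective _ (hinj y),
    Set.ncard_image_of_injective _ (hinj z)]

def IsMotzkinPrefix (l : List ℤ) : Prop :=
  (∀ x ∈ l, x = 1 ∨ x = -1 ∨ x = 0) ∧ ∀ k : ℕ, 0 ≤ (l.take k).sum

def prefixes (n a b r : ℕ) : Set (List ℤ) :=
  {l | l.length = n ∧ IsMotzkinPrefix l ∧ l.count 1 = a ∧ l.count (-1) = b ∧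
    hZeroSteps l = r}

lemma IsMotzkinPrefix.sum_nonneg {l : List ℤ} (hl : IsMotzkinPrefix l) : 0 ≤ l.sum := by
  simpa using hl.2 l.length

lemma isMotzkinPrefix_append_singleton_iff {l : List ℤ} {x : ℤ}
    (hx : x = 1 ∨ x = -1 ∨ x = 0) :
    IsMotzkinPrefix (l ++ [x]) ↔ IsMotzkinPrefix l ∧ 0 ≤ l.sum + x := by
  have htake (k : ℕ) : (l ++ [x]).take k = if k ≤ l.length then l.take k else l ++ [x] := by
    split_ifs with hk
    · exact List.take_append_of_le_length hk
    · exact List.take_of_length_le (by simp; omega)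
  constructor
  · rintro ⟨hsteps, hsums⟩
    refine ⟨⟨fun y hy => hsteps y (by simp [hy]), fun k => ?_⟩,
      by simpa using hsums (l.length + 1)⟩
    by_cases hk : k ≤ l.length
    · simpa [htake, hk] using hsums k
    · simpa [htake, List.take_of_length_le (not_le.1 hk).le] using hsums l.length
  · rintro ⟨⟨hsteps, hsums⟩, hsum⟩
    refine ⟨fun y hy => ?_, fun k => ?_⟩
    · rcases List.mem_append.1 hy with hy | hy
      · exact hsteps y hy
      · rwa [List.mem_singleton.1 hy]
    · rw [htake]
      split_ifs
      · exact hsums k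
      · simpa using hsum

lemma prefixes_finite (n a b r : ℕ) : (prefixes n a b r).Finite :=
  (finite_setOf_length_eq_forall_mem (s := {1, -1, 0}) (by simp) n).subset
    fun _ ⟨hn, hl, _⟩ => ⟨hn, by simpa using hl.1⟩

lemma sum_eq_of_mem_prefixes {n a b r : ℕ} {l : List ℤ} (hl : l ∈ prefixes n a b r) :
    l.sum = a - b := by
  rw [sum_eq_count_sub_count hl.2.1.1, hl.2.2.1, hl.2.2.2.1]

lemma prefixes_eq_empty_of_lt {n a b r : ℕ} (h : a < b) : prefixes n a b r = ∅ :=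
  Set.eq_empty_of_forall_notMem fun _ hl => by
    have := (sum_eq_of_mem_prefixes hl) ▸ hl.2.1.sum_nonneg
    omega

lemma setOf_isMotzkinPath_eq_prefixes (n u r : ℕ) :
    {l : List ℤ | l.length = n ∧ IsMotzkinPath l ∧ l.count 1 = u ∧ hZeroSteps l = r} =
      prefixes n u u r := by
  ext l
  simp only [Set.mem_ofPred_eq, prefixes, IsMotzkinPath, IsMotzkinPrefix]
  constructor
  · rintro ⟨hn, ⟨hsteps, hsums, hsum⟩, hu, hr⟩
    refine ⟨hn, ⟨hsteps, hsums⟩, hu, ?_, hr⟩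
    have := sum_eq_count_sub_count hsteps
    omega
  · rintro ⟨hn, ⟨hsteps, hsums⟩, hu, hd, hr⟩
    refine ⟨hn, ⟨hsteps, hsums, ?_⟩, hu, hr⟩
    rw [sum_eq_count_sub_count hsteps, hu, hd, sub_self]

lemma prefixes_zero_length (a b r : ℕ) : prefixes 0 (a + 1) b r = ∅ :=
  Set.eq_empty_of_forall_notMem fun l hl => by
    rw [prefixes, Set.mem_ofPred_eq, List.length_eq_zero_iff] at hl
    obtain ⟨rfl, -, h, -⟩ := hl
    simp at h

lemma ncard_prefixes_zero_zero (n r : ℕ) :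
    (prefixes n 0 0 r).ncard = if r = n then 1 else 0 := by
  have hset : prefixes n 0 0 r = if r = n then {List.replicate n 0} else ∅ := by
    ext l
    constructor
    · intro hl
      have hzero : ∀ x ∈ l, x = 0 := fun x hx => by
        rcases hl.2.1.1 x hx with rfl | rfl | rfl
        · exact absurd hl.2.2.1 (List.count_pos_iff.2 hx).ne'
        · exact absurd hl.2.2.2.1 (List.count_pos_iff.2 hx).ne'
        · rfl
      have hrep : l = List.replicate n 0 := hl.1 ▸ List.eq_replicate_of_mem hzero
      rw [if_pos (hl.2.2.2.2.symm.trans (hrep ▸ hZeroSteps_replicate_zero n))]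
      exact hrep
    · split_ifs with h
      · rintro rfl
        exact ⟨List.length_replicate, ⟨by simp, fun k => by simp [List.take_replicate]⟩,
          by simp [List.count_replicate], by simp [List.count_replicate],
          h ▸ hZeroSteps_replicate_zero n⟩
      · exact False.elim
  rw [hset]
  split_ifs <;> simp

lemma exists_eq_append_of_mem_prefixes {n a b r : ℕ} {l : List ℤ}
    (hl : l ∈ prefixes (n + 1) a b r) :
    ∃ t, l = t ++ [1] ∨ l = t ++ [-1] ∨ l = t ++ [0] := by
  have hne : l ≠ [] := List.ne_nil_of_length_eq_add_one hl.1
  refine ⟨l.dropLast, ?_⟩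
  rw [← List.dropLast_append_getLast hne]
  simpa using hl.2.1.1 _ (List.getLast_mem hne)

lemma append_singleton_mem_prefixes_iff {l : List ℤ} {x : ℤ} (hx : x = 1 ∨ x = -1 ∨ x = 0)
    {n a b r : ℕ} : l ++ [x] ∈ prefixes (n + 1) a b r ↔
      l.length = n ∧ IsMotzkinPrefix l ∧ 0 ≤ l.sum + x ∧
      l.count 1 + (if x = 1 then 1 else 0) = a ∧ l.count (-1) + (if x = -1 then 1 else 0) = b ∧
      hZeroSteps l + (if x = 0 ∧ l.sum = 0 then 1 else 0) = r := by
  simp only [prefixes, Set.mem_ofPred_eq, isMotzkinPrefix_append_singleton_iff hx,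
    hZeroSteps_append_singleton, List.length_append, List.length_singleton, List.count_append,
    List.count_singleton, beq_iff_eq, add_left_inj, and_assoc]

lemma setOf_append_up_mem_prefixes (n a b r : ℕ) :
    {l | l ++ [1] ∈ prefixes (n + 1) (a + 1) b r} = prefixes n a b r := by
  ext l
  rw [Set.mem_ofPred_eq, append_singleton_mem_prefixes_iff (Or.inl rfl)]
  norm_num [prefixes]
  exact fun _ hl _ _ _ => by linarith [hl.sum_nonneg]

lemma setOf_append_down_mem_prefixes {a b : ℕ} (h : b < a) (n r : ℕ) :
    {l | l ++ [-1] ∈ prefixes (n + 1) a (b + 1) r} = prefixes n a b r := by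
  ext l
  rw [Set.mem_ofPred_eq, append_singleton_mem_prefixes_iff (Or.inr (Or.inl rfl))]
  norm_num [prefixes]
  intro _ hl h1 h2 _
  rw [sum_eq_count_sub_count hl.1, h1, h2]
  omega

lemma setOf_append_down_mem_prefixes_zero (n a r : ℕ) :
    {l | l ++ [-1] ∈ prefixes (n + 1) a 0 r} = ∅ := by
  ext l
  rw [Set.mem_ofPred_eq, append_singleton_mem_prefixes_iff (Or.inr (Or.inl rfl))]
  simp

lemma append_flat_mem_prefixes_iff {l : List ℤ} {n a b r : ℕ} :
    l ++ [0] ∈ prefixes (n + 1) a b r ↔ l.length = n ∧ IsMotzkinPrefix l ∧ l.count 1 = a ∧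
      l.count (-1) = b ∧ hZeroSteps l + (if a = b then 1 else 0) = r := by
  rw [append_singleton_mem_prefixes_iff (Or.inr (Or.inr rfl))]
  norm_num
  intro _ hl
  have hnn := hl.sum_nonneg
  rw [sum_eq_count_sub_count hl.1] at hnn ⊢
  constructor
  · rintro ⟨-, rfl, rfl, h⟩
    refine ⟨rfl, rfl, ?_⟩
    split_ifs at h ⊢ <;> omega
  · rintro ⟨rfl, rfl, h⟩
    refine ⟨hnn, rfl, rfl, ?_⟩
    split_ifs at h ⊢ <;> omega

lemma setOf_append_flat_mem_prefixes {a b : ℕ} (h : a ≠ b) (n r : ℕ) :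
    {l | l ++ [0] ∈ prefixes (n + 1) a b r} = prefixes n a b r := by
  ext l
  rw [Set.mem_ofPred_eq, append_flat_mem_prefixes_iff, if_neg h, add_zero]
  rfl

lemma setOf_append_flat_mem_prefixes_self (n a r : ℕ) :
    {l | l ++ [0] ∈ prefixes (n + 1) a a (r + 1)} = prefixes n a a r := by
  ext l
  rw [Set.mem_ofPred_eq, append_flat_mem_prefixes_iff, if_pos rfl, add_left_inj]
  rfl

lemma setOf_append_flat_mem_prefixes_self_zero (n a : ℕ) :
    {l | l ++ [0] ∈ prefixes (n + 1) a a 0} = ∅ := by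
  ext l
  simp [append_flat_mem_prefixes_iff]

lemma ncard_prefixes_succ (n a b r : ℕ) :
    (prefixes (n + 1) a b r).ncard = {l | l ++ [1] ∈ prefixes (n + 1) a b r}.ncard +
      {l | l ++ [-1] ∈ prefixes (n + 1) a b r}.ncard +
      {l | l ++ [0] ∈ prefixes (n + 1) a b r}.ncard :=
  ncard_eq_ncard_preimage_append_add (prefixes_finite _ _ _ _) (by norm_num) (by norm_num)
    (by norm_num) fun _ => exists_eq_append_of_mem_prefixes

lemma ncard_prefixes_succ_of_lt {a b : ℕ} (h : b < a) (n r : ℕ) :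
    (prefixes (n + 1) (a + 1) (b + 1) r).ncard = (prefixes n a (b + 1) r).ncard +
      (prefixes n (a + 1) b r).ncard + (prefixes n (a + 1) (b + 1) r).ncard := by
  rw [ncard_prefixes_succ, setOf_append_up_mem_prefixes, setOf_append_down_mem_prefixes (by omega),
    setOf_append_flat_mem_prefixes (by omega)]

lemma ncard_prefixes_succ_zero (n a r : ℕ) :
    (prefixes (n + 1) (a + 1) 0 r).ncard =
      (prefixes n a 0 r).ncard + (prefixes n (a + 1) 0 r).ncard := by
  rw [ncard_prefixes_succ, setOf_append_up_mem_prefixes, setOf_append_down_mem_prefixes_zero,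
    setOf_append_flat_mem_prefixes (by omega), Set.ncard_empty, add_zero]

lemma ncard_prefixes_succ_self_succ (n a r : ℕ) :
    (prefixes (n + 1) (a + 1) (a + 1) (r + 1)).ncard =
      (prefixes n (a + 1) a (r + 1)).ncard + (prefixes n (a + 1) (a + 1) r).ncard := by
  rw [ncard_prefixes_succ, setOf_append_up_mem_prefixes, setOf_append_down_mem_prefixes (by omega),
    setOf_append_flat_mem_prefixes_self, prefixes_eq_empty_of_lt (by omega), Set.ncard_empty,
    zero_add]

lemma ncard_prefixes_succ_self_zero (n a : ℕ) :
    (prefixes (n + 1) (a + 1) (a + 1) 0).ncard = (prefixes n (a + 1) a 0).ncard := by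
  rw [ncard_prefixes_succ, setOf_append_up_mem_prefixes, setOf_append_down_mem_prefixes (by omega),
    setOf_append_flat_mem_prefixes_self_zero, prefixes_eq_empty_of_lt (by omega), Set.ncard_empty,
    zero_add, add_zero]

/-- For `1 ≤ a` and `q ≤ b ≤ a`, the number of up/down paths with `a` up and `b` down steps that
stay weakly above level 0 and return to it exactly `q` times (reflection principle). -/
def ballot (a b q : ℕ) : ℝ := ((a + b - q - 1).choose (a - 1) : ℝ) - (a + b - q - 1).choose a

/-- The guard discards the junk values that the truncated subtractions produce when
`n < a + b + r`. -/
noncomputable def countFormula (n a b r : ℕ) : ℝ :=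
  if a + b + r ≤ n then
    ∑ q ∈ range (b + 1),
      ballot a b q * (r + q).choose q * (n - r - q - 1).choose (a + b - q - 1)
  else 0

lemma ballot_add_two_add_one {a b q : ℕ} (hq : q ≤ b + 1) :
    ballot (a + 2) (b + 1) q = ballot (a + 1) (b + 1) q + ballot (a + 2) b q := by
  simp only [ballot, show a + 2 + (b + 1) - q - 1 = (a + b + 1 - q) + 1 by omega,
    show a + 1 + (b + 1) - q - 1 = a + b + 1 - q by omega,
    show a + 2 + b - q - 1 = a + b + 1 - q by omega, Nat.add_sub_cancel,
    show a + 2 - 1 = a + 1 by omega, Nat.choose_succ_succ']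
  push_cast
  ring

lemma ballot_add_two_self_add_one (a b : ℕ) : ballot (a + 2) b (b + 1) = 0 := by
  simp [ballot, show a + 2 + b - (b + 1) - 1 = a by omega, Nat.choose_eq_zero_of_lt]

lemma ballot_self_zero (a : ℕ) : ballot (a + 1) (a + 1) 0 = 0 := by
  rw [ballot, show a + 1 + (a + 1) - 0 - 1 = 2 * a + 1 by omega, Nat.add_sub_cancel,
    Nat.choose_symm_half, sub_self]

lemma ballot_self_add_one (a q : ℕ) : ballot (a + 1) (a + 1) (q + 1) = ballot (a + 1) a q := by
  simp only [ballot, show a + 1 + (a + 1) - (q + 1) - 1 = a + 1 + a - q - 1 by omega]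

lemma countFormula_zero_length (a b r : ℕ) : countFormula 0 (a + 1) b r = 0 :=
  if_neg (by omega)

lemma countFormula_add_two_of_le_succ {n a b r : ℕ} (h : a + 2 + b + r ≤ n + 1) :
    countFormula n (a + 2) b r = ∑ q ∈ range (b + 1),
      ballot (a + 2) b q * (r + q).choose q * (n - r - q - 1).choose (a + 2 + b - q - 1) := by
  rw [countFormula]
  split_ifs with hn
  · rfl
  · refine (sum_eq_zero fun q hq => ?_).symm
    have : n - r - q - 1 < a + 2 + b - q - 1 := by rw [mem_range] at hq; omega
    rw [Nat.choose_eq_zero_of_lt this, Nat.cast_zero, mul_zero]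

lemma countFormula_succ_add_two {a b : ℕ} (h : b ≤ a) (n r : ℕ) :
    countFormula (n + 1) (a + 2) (b + 1) r = countFormula n (a + 1) (b + 1) r +
      countFormula n (a + 2) b r + countFormula n (a + 2) (b + 1) r := by
  rcases le_or_gt (a + 2 + (b + 1) + r) (n + 1) with hn | hn
  · have hdown : countFormula n (a + 2) b r = ∑ q ∈ range (b + 2),
        ballot (a + 2) b q * (r + q).choose q * (n - r - q - 1).choose (a + 2 + b - q - 1) := by
      rw [countFormula, if_pos (by omega), sum_range_succ _ (b + 1), ballot_add_two_self_add_one,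
        zero_mul, zero_mul, add_zero]
    rw [countFormula, if_pos hn, countFormula, if_pos (by omega), hdown,
      countFormula_add_two_of_le_succ (by omega), ← sum_add_distrib, ← sum_add_distrib]
    refine sum_congr rfl fun q hq => ?_
    rw [mem_range] at hq
    rw [show n + 1 - r - q - 1 = (n - r - q - 1) + 1 by omega,
      show a + 2 + (b + 1) - q - 1 = (a + b + 1 - q) + 1 by omega, Nat.choose_succ_succ',
      show a + 1 + (b + 1) - q - 1 = a + b + 1 - q by omega,
      show a + 2 + b - q - 1 = a + b + 1 - q by omega, ballot_add_two_add_one (by omega)]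
    push_cast
    ring
  · rw [countFormula, countFormula, countFormula, countFormula, if_neg (by omega),
      if_neg (by omega), if_neg (by omega), if_neg (by omega), add_zero, add_zero]

lemma countFormula_zero_down (n a r : ℕ) :
    countFormula n (a + 1) 0 r = if a + 1 + r ≤ n then ((n - r - 1).choose a : ℝ) else 0 := by
  simp [countFormula, ballot]

lemma countFormula_succ_zero_down (n a r : ℕ) :
    countFormula (n + 1) (a + 1) 0 r =
      (if a = 0 then if r = n then 1 else 0 else countFormula n a 0 r) +
        countFormula n (a + 1) 0 r := by
  rcases a with _ | a
  · simp only [countFormula_zero_down, Nat.choose_zero_right, Nat.cast_one, if_true]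
    split_ifs <;> norm_num <;> omega
  · rw [countFormula_zero_down, countFormula_zero_down, countFormula_zero_down,
      if_neg (Nat.succ_ne_zero a)]
    rcases lt_trichotomy (a + 2 + r) (n + 1) with hn | hn | hn
    · rw [if_pos (by omega), if_pos (by omega), if_pos (by omega),
        show n + 1 - r - 1 = (n - r - 1) + 1 by omega, Nat.choose_succ_succ', Nat.cast_add]
    · rw [if_pos (by omega), if_pos (by omega), if_neg (by omega),
        show n + 1 - r - 1 = a + 1 by omega, show n - r - 1 = a by omega, Nat.choose_self,
        Nat.choose_self, add_zero]
    · rw [if_neg (by omega), if_neg (by omega), if_neg (by omega), add_zero]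

lemma countFormula_succ_self_succ (n a r : ℕ) :
    countFormula (n + 1) (a + 1) (a + 1) (r + 1) =
      countFormula n (a + 1) a (r + 1) + countFormula n (a + 1) (a + 1) r := by
  rcases le_or_gt (a + 1 + (a + 1) + (r + 1)) (n + 1) with hn | hn
  · rw [countFormula, if_pos hn, countFormula, if_pos (by omega), countFormula, if_pos (by omega),
      sum_range_succ' _ (a + 1), sum_range_succ' _ (a + 1)]
    simp only [ballot_self_zero, zero_mul, add_zero]
    rw [← sum_add_distrib]
    refine sum_congr rfl fun p hp => ?_
    rw [mem_range] at hp
    rw [ballot_self_add_one, show r + 1 + (p + 1) = (r + 1 + p) + 1 by ring, Nat.choose_succ_succ',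
      show n + 1 - (r + 1) - (p + 1) - 1 = n - (r + 1) - p - 1 by omega,
      show n - r - (p + 1) - 1 = n - (r + 1) - p - 1 by omega,
      show a + 1 + (a + 1) - (p + 1) - 1 = a + 1 + a - p - 1 by omega,
      show r + (p + 1) = r + 1 + p by ring]
    push_cast
    ring
  · rw [countFormula, countFormula, countFormula, if_neg (by omega), if_neg (by omega),
      if_neg (by omega), add_zero]

lemma countFormula_succ_self_zero (n a : ℕ) :
    countFormula (n + 1) (a + 1) (a + 1) 0 = countFormula n (a + 1) a 0 := by
  rcases le_or_gt (a + 1 + (a + 1) + 0) (n + 1) with hn | hn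
  · rw [countFormula, if_pos hn, countFormula, if_pos (by omega), sum_range_succ' _ (a + 1),
      ballot_self_zero, zero_mul, zero_mul, add_zero]
    refine sum_congr rfl fun p hp => ?_
    rw [mem_range] at hp
    rw [ballot_self_add_one, show n + 1 - 0 - (p + 1) - 1 = n - 0 - p - 1 by omega,
      show a + 1 + (a + 1) - (p + 1) - 1 = a + 1 + a - p - 1 by omega]
    simp only [zero_add, Nat.choose_self]
  · rw [countFormula, countFormula, if_neg (by omega), if_neg (by omega)]

theorem ncard_prefixes_eq_countFormula (n : ℕ) :
    ∀ a b r : ℕ, b ≤ a + 1 →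
      ((prefixes n (a + 1) b r).ncard : ℝ) = countFormula n (a + 1) b r := by
  induction n with
  | zero =>
    intro a b r _
    rw [prefixes_zero_length, Set.ncard_empty, Nat.cast_zero, countFormula_zero_length]
  | succ n ih =>
    intro a b r hba
    rcases b with _ | b
    · rw [ncard_prefixes_succ_zero, countFormula_succ_zero_down, Nat.cast_add,
        ih a 0 r (Nat.zero_le _)]
      rcases a with _ | a
      · rw [ncard_prefixes_zero_zero, if_pos rfl, Nat.cast_ite, Nat.cast_one, Nat.cast_zero]
      · rw [ih a 0 r (Nat.zero_le _), if_neg (Nat.succ_ne_zero a)]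
    rcases Nat.lt_or_eq_of_le (Nat.le_of_succ_le_succ hba) with hba | rfl
    · obtain ⟨a, rfl⟩ : ∃ c, a = c + 1 := ⟨a - 1, by omega⟩
      rw [ncard_prefixes_succ_of_lt (by omega), countFormula_succ_add_two (by omega)]
      push_cast
      rw [ih a (b + 1) r (by omega), ih (a + 1) b r (by omega), ih (a + 1) (b + 1) r (by omega)]
    · rcases r with _ | r
      · rw [ncard_prefixes_succ_self_zero, countFormula_succ_self_zero, ih b b 0 (by omega)]
      · rw [ncard_prefixes_succ_self_succ, countFormula_succ_self_succ]
        push_cast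
        rw [ih b b (r + 1) (by omega), ih b (b + 1) r le_rfl]

theorem sum_range_choose_add_mul_choose_add_sub (s t m : ℕ) :
    ∑ i ∈ range (m + 1), (s + i).choose s * (t + (m - i)).choose t =
      (s + t + 1 + m).choose (s + t + 1) := by
  -- the coefficient of `X ^ m` in `(1 - X)⁻¹ ^ (s + 1) * (1 - X)⁻¹ ^ (t + 1)`
  have h := congrArg (PowerSeries.coeff (R := ℤ) m)
    (pow_add (PowerSeries.mk 1 : PowerSeries ℤ) (s + 1) (t + 1))
  rw [show s + 1 + (t + 1) = s + t + 1 + 1 by ring, PowerSeries.mk_one_pow_eq_mk_choose_add,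
    PowerSeries.mk_one_pow_eq_mk_choose_add, PowerSeries.mk_one_pow_eq_mk_choose_add,
    PowerSeries.coeff_mul, Nat.sum_antidiagonal_eq_sum_range_succ_mk] at h
  simp only [PowerSeries.coeff_mk] at h
  exact_mod_cast h.symm

lemma sum_range_choose_mul_choose_sub (n u r : ℕ) (h : r + u + 2 ≤ n) :
    ∑ q ∈ range (u + 2), (r + q).choose (r + 1) * (n - r - 1 - q).choose (u + 1 - q) =
      n.choose u := by
  rw [sum_range_succ', Nat.choose_eq_zero_of_lt (by omega : r + 0 < r + 1), zero_mul, add_zero]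
  have hterm : ∀ p ∈ range (u + 1), (r + (p + 1)).choose (r + 1) *
      (n - r - 1 - (p + 1)).choose (u + 1 - (p + 1)) =
      (r + 1 + p).choose (r + 1) * (n - r - u - 2 + (u - p)).choose (n - r - u - 2) := by
    intro p hp
    rw [mem_range] at hp
    rw [show r + (p + 1) = r + 1 + p by ring,
      show n - r - 1 - (p + 1) = n - r - u - 2 + (u - p) by omega,
      show u + 1 - (p + 1) = u - p by omega, Nat.choose_symm_add (a := n - r - u - 2)]
  rw [sum_congr rfl hterm, sum_range_choose_add_mul_choose_add_sub,
    show r + 1 + (n - r - u - 2) + 1 + u = n by omega]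
  exact Nat.choose_symm_of_eq_add (by omega)

lemma add_one_mul_ballot_self {u q : ℕ} (hq : q ≤ u + 1) :
    (u + 1 : ℝ) * ballot (u + 1) (u + 1) q = q * (2 * u + 1 - q).choose u := by
  have h := Nat.choose_succ_right_eq (2 * u + 1 - q) u
  rw [show 2 * u + 1 - q - u = u + 1 - q by omega] at h
  have hc : ((2 * u + 1 - q).choose (u + 1) : ℝ) * (u + 1) =
      (2 * u + 1 - q).choose u * (u + 1 - q) := by
    have hcast : ((u + 1 - q : ℕ) : ℝ) = u + 1 - q := by
      rw [Nat.cast_sub hq, Nat.cast_add_one]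
    rw [← hcast]
    exact_mod_cast h
  rw [ballot, show u + 1 + (u + 1) - q - 1 = 2 * u + 1 - q by omega, Nat.add_sub_cancel]
  linear_combination -hc

lemma mul_choose_mul_choose_mul_choose_eq {n u r q : ℕ} (h : r + u + 2 ≤ n) (hq : q ≤ u + 1) :
    q * (2 * u + 1 - q).choose u * (r + q).choose q * (n - r - q - 1).choose (2 * u + 1 - q) =
      (r + 1) * (n - r - u - 2).choose u *
        ((r + q).choose (r + 1) * (n - r - 1 - q).choose (u + 1 - q)) := by
  have hr : q * (r + q).choose q = (r + 1) * (r + q).choose (r + 1) := by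
    have := Nat.choose_succ_right_eq (r + q) r
    rw [Nat.add_sub_cancel_left, Nat.choose_symm_add] at this
    linarith
  have hmul := Nat.choose_mul (n := n - r - q - 1) (k := 2 * u + 1 - q) (s := u + 1 - q) (by omega)
  rw [Nat.choose_symm_of_eq_add (show 2 * u + 1 - q = (u + 1 - q) + u by omega),
    show n - r - q - 1 - (u + 1 - q) = n - r - u - 2 by omega,
    show 2 * u + 1 - q - (u + 1 - q) = u by omega] at hmul
  rw [show n - r - 1 - q = n - r - q - 1 by omega]
  calc _ = q * (r + q).choose q * ((n - r - q - 1).choose (2 * u + 1 - q) *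
        (2 * u + 1 - q).choose u) := by ring
    _ = _ := by rw [hr, hmul]; ring

theorem countFormula_self {n u r : ℕ} (h : 2 * (u + 1) + r ≤ n) :
    countFormula n (u + 1) (u + 1) r =
      (r + 1) / (n + 1) * (n + 1).choose (u + 1) * (n - r - (u + 1) - 1).choose u := by
  have hsum : (u + 1 : ℝ) * countFormula n (u + 1) (u + 1) r =
      (r + 1) * (n - r - u - 2).choose u * n.choose u := by
    rw [countFormula, if_pos (by omega), mul_sum,
      ← sum_range_choose_mul_choose_sub n u r (by omega), Nat.cast_sum, mul_sum]
    refine sum_congr rfl fun q hq => ?_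
    rw [mem_range] at hq
    rw [← mul_assoc, ← mul_assoc, add_one_mul_ballot_self (by omega),
      show u + 1 + (u + 1) - q - 1 = 2 * u + 1 - q by omega]
    exact_mod_cast mul_choose_mul_choose_mul_choose_eq (q := q) (by omega) (by omega)
  have hpascal : ((n + 1).choose (u + 1) : ℝ) * (u + 1) = (n + 1) * n.choose u := by
    exact_mod_cast (Nat.add_one_mul_choose_eq n u).symm
  refine mul_left_cancel₀ (show (u + 1 : ℝ) ≠ 0 by positivity) ?_
  rw [hsum, show n - r - (u + 1) - 1 = n - r - u - 2 by omega,
    show (u + 1 : ℝ) * ((r + 1) / (n + 1) * (n + 1).choose (u + 1) * (n - r - u - 2).choose u) =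
      (r + 1) / (n + 1) * ((n + 1).choose (u + 1) * (u + 1)) * (n - r - u - 2).choose u by ring,
    hpascal]
  field_simp

end Motzkin

theorem stmt7_general (n u r0 : ℕ) (hu : 1 ≤ u) (h : 2 * u + r0 ≤ n) :
    (({l : List ℤ | l.length = n ∧ IsMotzkinPath l ∧ l.count 1 = u ∧
        hZeroSteps l = r0}.ncard : ℝ))
      = (((r0 : ℝ) + 1) / ((n : ℝ) + 1)) * (Nat.choose (n + 1) u : ℝ) *
          (Nat.choose (n - r0 - u - 1) (u - 1) : ℝ) := by
  obtain ⟨u, rfl⟩ : ∃ v, u = v + 1 := ⟨u - 1, by omega⟩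
  rw [Motzkin.setOf_isMotzkinPath_eq_prefixes,
    Motzkin.ncard_prefixes_eq_countFormula n u (u + 1) r0 le_rfl, Motzkin.countFormula_self h,
    Nat.add_sub_cancel]

theorem stmt7 (n u r0 : ℕ) (hn : 1 ≤ n) (hu : 1 ≤ u) (h : 2 * u + r0 ≤ n) :
    (({l : List ℤ | l.length = n ∧ IsMotzkinPath l ∧ l.count 1 = u ∧
        hZeroSteps l = r0}.ncard : ℝ))
      = (((r0 : ℝ) + 1) / ((n : ℝ) + 1)) * (Nat.choose (n + 1) u : ℝ) *
          (Nat.choose (n - r0 - u - 1) (u - 1) : ℝ) :=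
  stmt7_general n u r0 hu h
end

section
/- For integers u ≥ 1, r₀ ≥ 0 and n with 2u + r₀ ≤ n, one has Σ_{p=1}^{u} binom(r₀+p,r₀)·binom(n−r₀−p−1,n−2u−r₀)·(p/u)·binom(2u−p−1,u−1) = ((r₀+1)/(n+1))·binom(n+1,u)·binom(n−r₀−u−1,u−1). -/
/-!
Since `p * C(r₀+p, r₀) = (r₀+1) * C(r₀+p, r₀+1)` and `(n+1) * C(n, u-1) = u * C(n+1, u)`, the factor
`(r₀+1)/u` comes out of both sides and the identity becomes one between natural numbers. In it, the
product `C(n-r₀-p-1, m) * C(2u-p-1, u-1)` with `m = n-2u-r₀` is a trinomial coefficient, equal to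
`C(n-r₀-p-1, u+m-1) * C(u+m-1, u-1)` with the second factor independent of `p`, and what remains is
the upper Chu–Vandermonde convolution `∑ᵢ C(i, r) * C(N-i, s) = C(N+1, r+s+1)`.
-/

open Finset

theorem Nat.sum_antidiagonal_choose_mul_choose (n r s : ℕ) :
    ∑ ij ∈ antidiagonal n, ij.1.choose r * ij.2.choose s = (n + 1).choose (r + s + 1) := by
  induction n generalizing r with
  | zero => rcases r with _ | r <;> rcases s with _ | s <;> simp [Nat.choose_eq_zero_of_lt]
  | succ n ih =>
    rw [Finset.Nat.sum_antidiagonal_succ]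
    rcases r with _ | r
    · have hockey_stick := ih 0
      simp only [Nat.choose_zero_right, one_mul, zero_add] at hockey_stick ⊢
      rw [hockey_stick, Nat.choose_succ_succ' (n + 1) s]
    · simp only [Nat.choose_succ_succ' _ r, add_mul, sum_add_distrib, ih, Nat.choose_zero_succ,
        zero_mul, zero_add]
      rw [add_right_comm r 1 s, Nat.choose_succ_succ' (n + 1) (r + s + 1)]

theorem Nat.sum_range_choose_mul_choose (n r s : ℕ) :
    ∑ i ∈ range n, i.choose r * (n - 1 - i).choose s = n.choose (r + s + 1) := by
  rcases n with _ | n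
  · simp
  · rw [← sum_antidiagonal_choose_mul_choose, Finset.Nat.sum_antidiagonal_eq_sum_range_succ_mk]
    simp

theorem Nat.sum_Icc_choose_mul_choose_mul_choose (u r n : ℕ) (hu : 1 ≤ u) (h : 2 * u + r ≤ n) :
    ∑ p ∈ Icc 1 u, (r + p).choose (r + 1) * (n - r - p - 1).choose (n - 2 * u - r) *
        (2 * u - p - 1).choose (u - 1) =
      n.choose (u - 1) * (n - r - u - 1).choose (u - 1) := by
  have trinomial_revision : ∀ p ∈ Icc 1 u,
      (n - r - p - 1).choose (n - 2 * u - r) * (2 * u - p - 1).choose (u - 1) =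
        (n - r - p - 1).choose (n - r - u - 1) * (n - r - u - 1).choose (u - 1) := by
    intro p hp
    have hp := mem_Icc.1 hp
    rw [Nat.choose_symm_of_eq_add (by omega : n - r - u - 1 = (u - 1) + (n - 2 * u - r)),
      Nat.choose_mul (by omega : n - 2 * u - r ≤ n - r - u - 1)]
    congr 2 <;> omega
  have vandermonde : ∑ p ∈ Icc 1 u,
      (r + p).choose (r + 1) * (n - r - p - 1).choose (n - r - u - 1) = n.choose (u - 1) := by
    rw [← Nat.choose_symm (by omega), show n - (u - 1) = (r + 1) + (n - r - u - 1) + 1 by omega,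
      ← sum_range_choose_mul_choose]
    -- substitute `i = r + p`: the terms with `i ∉ [r+1, r+u]` vanish
    refine sum_of_injOn (r + ·) (add_right_injective r).injOn ?_ ?_ ?_
    · intro p hp
      simp only [coe_Icc, Set.mem_Icc, coe_range, Set.mem_Iio] at hp ⊢
      omega
    · intro i hi hi_not_shift
      have hi := mem_range.1 hi
      simp only [coe_Icc, Set.mem_image, Set.mem_Icc, not_exists, not_and] at hi_not_shift
      rcases Nat.lt_or_ge r i with hri | hri
      · have : r + u < i := by
          by_contra!
          exact hi_not_shift (i - r) (by omega) (by omega)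
        rw [Nat.choose_eq_zero_of_lt (n := n - 1 - i) (by omega), mul_zero]
      · rw [Nat.choose_eq_zero_of_lt (by omega), zero_mul]
    · intro p _
      congr 2; omega
  rw [sum_congr rfl fun p hp => by rw [mul_assoc, trinomial_revision p hp, ← mul_assoc], ← sum_mul,
    vandermonde]

theorem stmt8 (u r0 n : ℕ) (hu : 1 ≤ u) (h : 2 * u + r0 ≤ n) :
    ∑ p ∈ Finset.Icc 1 u,
        (Nat.choose (r0 + p) r0 : ℝ) * (Nat.choose (n - r0 - p - 1) (n - 2 * u - r0) : ℝ) *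
          ((p : ℝ) / (u : ℝ)) * (Nat.choose (2 * u - p - 1) (u - 1) : ℝ)
      = (((r0 : ℝ) + 1) / ((n : ℝ) + 1)) * (Nat.choose (n + 1) u : ℝ) *
          (Nat.choose (n - r0 - u - 1) (u - 1) : ℝ) := by
  have hu' : (u : ℝ) ≠ 0 := by positivity
  have absorb_p (p : ℕ) : ((r0 + p).choose r0 : ℝ) * p = (r0 + 1) * (r0 + p).choose (r0 + 1) := by
    have := Nat.choose_succ_right_eq (r0 + p) r0
    rw [Nat.add_sub_cancel_left] at this
    exact_mod_cast this.symm.trans (mul_comm _ _)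
  have absorb_u : ((n + 1).choose u : ℝ) * u = (n + 1) * n.choose (u - 1) := by
    have := Nat.add_one_mul_choose_eq n (u - 1)
    rw [Nat.sub_add_cancel hu] at this
    exact_mod_cast this.symm
  calc _ = ∑ p ∈ Icc 1 u, ((r0 : ℝ) + 1) / u * ((r0 + p).choose (r0 + 1) *
          (n - r0 - p - 1).choose (n - 2 * u - r0) * (2 * u - p - 1).choose (u - 1) : ℕ) := by
        refine sum_congr rfl fun p _ => ?_
        push_cast
        field_simp
        linear_combination ((n - r0 - p - 1).choose (n - 2 * u - r0) *
          (2 * u - p - 1).choose (u - 1) : ℝ) * absorb_p p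
    _ = ((r0 : ℝ) + 1) / u * (n.choose (u - 1) * (n - r0 - u - 1).choose (u - 1) : ℕ) := by
        rw [← mul_sum, ← Nat.cast_sum, Nat.sum_Icc_choose_mul_choose_mul_choose u r0 n hu h]
    _ = _ := by
        push_cast
        field_simp
        linear_combination (-((n - r0 - u - 1).choose (u - 1) : ℝ)) * absorb_u
end

section
/- For every integer n ≥ 1, the number of Motzkin paths of size n having no horizontal step at level 0 minus the number of Motzkin paths of size n having exactly one horizontal step at level 0 equals (−1)^n. -/
/-- The number of Motzkin paths of size `n` with exactly `r0` horizontal steps at level 0. -/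
noncomputable def motzkinCount (r0 n : ℕ) : ℕ :=
  {l : List ℤ | l.length = n ∧ IsMotzkinPath l ∧ hZeroSteps l = r0}.ncard

/-- The number of Motzkin paths of size `n`. -/
noncomputable def motzkinNum (n : ℕ) : ℕ :=
  {l : List ℤ | l.length = n ∧ IsMotzkinPath l}.ncard

/-!
Write `a = motzkinCount 0`, `b = motzkinCount 1` and `m = motzkinNum`. A path of length `n + 2`
either starts with a horizontal step at level 0, followed by any path of length `n + 1`, or is an
arch `U A D B` with `A`, `B` Motzkin paths and `|A| + |B| = n`; in the arch only `B` contributes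
horizontal steps at level 0. This gives the convolution recurrences
`m (n+2) = m (n+1) + ∑ m i * m j`, `a (n+2) = ∑ m i * a j`, `b (n+2) = a (n+1) + ∑ m i * b j`
(sums over `i + j = n`), from which `a (n+1) + a n = m n = b (n+1) + b n` follows by strong
induction. Hence `a n - b n` changes sign at every step, and it equals `1` at `n = 0`.
-/

open Finset

def NonnegFrom (c : ℤ) (l : List ℤ) : Prop := ∀ k : ℕ, 0 ≤ c + (l.take k).sum

section NonnegFrom

variable {c x : ℤ} {t A B : List ℤ}

lemma NonnegFrom.nonneg (h : NonnegFrom c t) : 0 ≤ c := by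
  simpa using h 0

lemma nonnegFrom_nil : NonnegFrom c [] ↔ 0 ≤ c := by
  simp [NonnegFrom]

lemma nonnegFrom_cons : NonnegFrom c (x :: t) ↔ 0 ≤ c ∧ NonnegFrom (c + x) t := by
  refine ⟨fun h => ⟨h.nonneg, fun k => ?_⟩, fun ⟨h0, h⟩ k => ?_⟩
  · simpa [add_assoc] using h (k + 1)
  · cases k with
    | zero => simpa using h0
    | succ k => simpa [add_assoc] using h k

lemma nonnegFrom_append : NonnegFrom c (A ++ B) ↔ NonnegFrom c A ∧ NonnegFrom (c + A.sum) B := by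
  induction A generalizing c with
  | nil =>
    simp only [List.nil_append, List.sum_nil, add_zero, iff_and_self, nonnegFrom_nil]
    exact NonnegFrom.nonneg
  | cons x t ih =>
    simp only [List.cons_append, nonnegFrom_cons, ih, List.sum_cons, and_assoc, add_assoc]

lemma NonnegFrom.mono {c' : ℤ} (h : NonnegFrom c t) (hc : c ≤ c') : NonnegFrom c' t :=
  fun k => by linarith [h k]

end NonnegFrom

def hZeroFrom : ℤ → List ℤ → ℕ
  | _, [] => 0
  | c, x :: t => (if x = 0 ∧ c = 0 then 1 else 0) + hZeroFrom (c + x) t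

lemma hZeroFrom_eq_card (c : ℤ) (l : List ℤ) :
    hZeroFrom c l = #{i ∈ range l.length | l.getD i 1 = 0 ∧ c + (l.take i).sum = 0} := by
  induction l generalizing c with
  | nil => rfl
  | cons x t ih =>
    rw [hZeroFrom, ih, card_filter, card_filter, List.length_cons, sum_range_succ', add_comm]
    simp [add_assoc]

lemma hZeroSteps_eq_hZeroFrom (l : List ℤ) : hZeroSteps l = hZeroFrom 0 l := by
  rw [hZeroSteps, hZeroFrom_eq_card, ← Set.ncard_coe_finset]
  congr 1
  ext i
  simp

lemma hZeroFrom_append (A B : List ℤ) (c : ℤ) :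
    hZeroFrom c (A ++ B) = hZeroFrom c A + hZeroFrom (c + A.sum) B := by
  induction A generalizing c with
  | nil => simp [hZeroFrom]
  | cons x t ih => simp [hZeroFrom, ih, add_assoc]

lemma hZeroFrom_add_one_eq_zero {c : ℤ} {l : List ℤ} (h : NonnegFrom c l) :
    hZeroFrom (c + 1) l = 0 := by
  induction l generalizing c with
  | nil => rfl
  | cons x t ih =>
    obtain ⟨hc, ht⟩ := nonnegFrom_cons.1 h
    rw [hZeroFrom, add_right_comm, ih ht, if_neg (by omega)]

def motzkinArch (A B : List ℤ) : List ℤ := 1 :: (A ++ -1 :: B)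

lemma length_motzkinArch (A B : List ℤ) : (motzkinArch A B).length = A.length + B.length + 2 := by
  simp [motzkinArch]
  omega

lemma isMotzkinPath_iff {l : List ℤ} :
    IsMotzkinPath l ↔ (∀ x ∈ l, x = 1 ∨ x = -1 ∨ x = 0) ∧ NonnegFrom 0 l ∧ l.sum = 0 := by
  simp [IsMotzkinPath, NonnegFrom]

lemma isMotzkinPath_zero_cons {l : List ℤ} : IsMotzkinPath (0 :: l) ↔ IsMotzkinPath l := by
  simp [isMotzkinPath_iff, nonnegFrom_cons]

lemma isMotzkinPath_motzkinArch {A B : List ℤ} (hA : IsMotzkinPath A) (hB : IsMotzkinPath B) :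
    IsMotzkinPath (motzkinArch A B) := by
  rw [isMotzkinPath_iff] at *
  refine ⟨?_, ?_, by simp [motzkinArch, hA.2.2, hB.2.2]⟩
  · simp only [motzkinArch, List.mem_cons, List.mem_append]
    rintro x (rfl | hx | rfl | hx)
    exacts [by simp, hA.1 x hx, by simp, hB.1 x hx]
  · simp only [motzkinArch, nonnegFrom_cons, nonnegFrom_append, hA.2.2]
    exact ⟨le_rfl, hA.2.1.mono zero_le_one, zero_le_one, by simpa using hB.2.1⟩

lemma IsMotzkinPath.head_eq {x : ℤ} {t : List ℤ} (h : IsMotzkinPath (x :: t)) :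
    x = 1 ∨ x = 0 := by
  rw [isMotzkinPath_iff, List.forall_mem_cons, nonnegFrom_cons] at h
  have := h.2.1.2.nonneg
  omega

/-- First return decomposition. -/
lemma exists_eq_append_of_nonnegFrom {c : ℤ} {t : List ℤ}
    (hsteps : ∀ x ∈ t, x = 1 ∨ x = -1 ∨ x = 0) (hc : 1 ≤ c) (ht : NonnegFrom c t)
    (hsum : c + t.sum = 0) :
    ∃ A B, t = A ++ -1 :: B ∧ NonnegFrom (c - 1) A ∧ c + A.sum = 1 ∧ IsMotzkinPath B := by
  induction t generalizing c with
  | nil => rw [List.sum_nil] at hsum; omega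
  | cons x t ih =>
    rw [List.forall_mem_cons] at hsteps
    rw [nonnegFrom_cons] at ht
    rw [List.sum_cons, ← add_assoc] at hsum
    by_cases hcx : c + x = 0
    · obtain rfl : x = -1 := by omega
      refine ⟨[], t, rfl, nonnegFrom_nil.2 (by omega), by rw [List.sum_nil]; omega, ?_⟩
      exact isMotzkinPath_iff.2 ⟨hsteps.2, hcx ▸ ht.2, by omega⟩
    · have hcx : 1 ≤ c + x := by have := ht.2.nonneg; omega
      obtain ⟨A, B, rfl, hA, hAs, hB⟩ := ih hsteps.2 hcx ht.2 hsum
      refine ⟨x :: A, B, rfl, nonnegFrom_cons.2 ⟨by omega, by rwa [sub_add_eq_add_sub]⟩, ?_, hB⟩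
      rwa [List.sum_cons, ← add_assoc]

lemma IsMotzkinPath.exists_eq_motzkinArch {t : List ℤ} (h : IsMotzkinPath (1 :: t)) :
    ∃ A B, IsMotzkinPath A ∧ IsMotzkinPath B ∧ 1 :: t = motzkinArch A B := by
  rw [isMotzkinPath_iff, List.forall_mem_cons, nonnegFrom_cons] at h
  obtain ⟨A, B, rfl, hA, hAs, hB⟩ :=
    exists_eq_append_of_nonnegFrom h.1.2 le_rfl h.2.1.2 (by simpa using h.2.2)
  refine ⟨A, B, isMotzkinPath_iff.2 ⟨fun x hx => h.1.2 x (by simp [hx]), ?_, by omega⟩, hB, rfl⟩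
  simpa using hA

lemma not_append_neg_one_prefix {A A' : List ℤ} (hA : A.sum = 0) (hA' : NonnegFrom 0 A') :
    ¬ A ++ [-1] <+: A' := by
  intro hp
  have := hA' (A ++ [-1]).length
  rw [← List.prefix_iff_eq_take.1 hp] at this
  simp [hA] at this

lemma length_le_of_append_neg_one_eq {A B A' B' : List ℤ} (hA : A.sum = 0) (hA' : NonnegFrom 0 A')
    (h : A ++ -1 :: B = A' ++ -1 :: B') : A'.length ≤ A.length := by
  by_contra! hlt
  refine not_append_neg_one_prefix hA hA'
    (List.prefix_of_prefix_length_le ?_ (List.prefix_append A' (-1 :: B')) ?_)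
  · rw [← h]
    simp
  · simpa using hlt

lemma motzkinArch_inj {A B A' B' : List ℤ} (hA : IsMotzkinPath A) (hA' : IsMotzkinPath A')
    (h : motzkinArch A B = motzkinArch A' B') : A = A' ∧ B = B' := by
  rw [isMotzkinPath_iff] at hA hA'
  simp only [motzkinArch, List.cons.injEq, true_and] at h
  obtain ⟨rfl, h⟩ := List.append_inj h <| le_antisymm
    (length_le_of_append_neg_one_eq hA'.2.2 hA.2.1 h.symm)
    (length_le_of_append_neg_one_eq hA.2.2 hA'.2.1 h)
  simpa using h

lemma hZeroFrom_zero_cons (l : List ℤ) : hZeroFrom 0 (0 :: l) = hZeroFrom 0 l + 1 := by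
  simp [hZeroFrom, add_comm]

lemma hZeroFrom_motzkinArch {A : List ℤ} (B : List ℤ) (hA : IsMotzkinPath A) :
    hZeroFrom 0 (motzkinArch A B) = hZeroFrom 0 B := by
  rw [isMotzkinPath_iff] at hA
  have := hZeroFrom_add_one_eq_zero hA.2.1
  simp_all [motzkinArch, hZeroFrom, hZeroFrom_append]

lemma finite_setOf_isMotzkinPath (n : ℕ) :
    {l : List ℤ | l.length = n ∧ IsMotzkinPath l}.Finite := by
  refine ((List.finite_length_eq (Set.Icc (-1 : ℤ) 1) n).image (List.map Subtype.val)).subset ?_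
  rintro l ⟨rfl, hl⟩
  lift l to List (Set.Icc (-1 : ℤ) 1) using fun x hx => by
    rcases hl.1 x hx with rfl | rfl | rfl <;> simp
  exact ⟨l, by simp, rfl⟩

noncomputable def motzkinPaths (n : ℕ) : Finset (List ℤ) :=
  (finite_setOf_isMotzkinPath n).toFinset

lemma mem_motzkinPaths {n : ℕ} {l : List ℤ} :
    l ∈ motzkinPaths n ↔ l.length = n ∧ IsMotzkinPath l :=
  Set.Finite.mem_toFinset _

lemma motzkinNum_eq_card (n : ℕ) : motzkinNum n = #(motzkinPaths n) :=
  Set.ncard_eq_toFinset_card _ _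

lemma motzkinCount_eq_card (r n : ℕ) :
    motzkinCount r n = #{l ∈ motzkinPaths n | hZeroFrom 0 l = r} := by
  rw [motzkinCount, ← Set.ncard_coe_finset]
  congr 1
  ext l
  simp [mem_motzkinPaths, hZeroSteps_eq_hZeroFrom, and_assoc]

lemma motzkinPaths_zero : motzkinPaths 0 = {[]} := by
  ext l
  simp only [mem_motzkinPaths, List.length_eq_zero_iff, mem_singleton, and_iff_left_iff_imp]
  rintro rfl
  simp [IsMotzkinPath]

lemma motzkinPaths_one : motzkinPaths 1 = {[0]} := by
  ext l
  simp only [mem_motzkinPaths, List.length_eq_one_iff, mem_singleton]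
  constructor
  · rintro ⟨⟨x, rfl⟩, h⟩
    simpa using h.2.2
  · rintro rfl
    exact ⟨⟨0, rfl⟩, isMotzkinPath_zero_cons.2 (by simp [IsMotzkinPath])⟩

lemma motzkinPaths_add_two (n : ℕ) :
    motzkinPaths (n + 2) = (motzkinPaths (n + 1)).image (List.cons 0) ∪
      ((antidiagonal n).sigma fun p => motzkinPaths p.1 ×ˢ motzkinPaths p.2).image
        fun x => motzkinArch x.2.1 x.2.2 := by
  ext l
  simp only [mem_union, mem_image, mem_sigma, mem_product, HasAntidiagonal.mem_antidiagonal,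
    mem_motzkinPaths, Sigma.exists, Prod.exists]
  constructor
  · rintro ⟨hlen, hl⟩
    obtain _ | ⟨x, t⟩ := l
    · simp at hlen
    obtain rfl | rfl := hl.head_eq
    · obtain ⟨A, B, hA, hB, h⟩ := hl.exists_eq_motzkinArch
      refine .inr ⟨A.length, B.length, A, B, ⟨?_, ⟨rfl, hA⟩, rfl, hB⟩, h.symm⟩
      rw [h, length_motzkinArch] at hlen
      omega
    · exact .inl ⟨t, ⟨by simpa using hlen, isMotzkinPath_zero_cons.1 hl⟩, rfl⟩
  · rintro (⟨t, ⟨ht, hMt⟩, rfl⟩ | ⟨i, j, A, B, ⟨rfl, ⟨rfl, hA⟩, rfl, hB⟩, rfl⟩)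
    · exact ⟨by simp [ht], isMotzkinPath_zero_cons.2 hMt⟩
    · exact ⟨length_motzkinArch A B, isMotzkinPath_motzkinArch hA hB⟩

lemma sum_motzkinPaths_add_two {M : Type*} [AddCommMonoid M] (f : List ℤ → M) (n : ℕ) :
    ∑ l ∈ motzkinPaths (n + 2), f l =
      ∑ l ∈ motzkinPaths (n + 1), f (0 :: l) +
        ∑ p ∈ antidiagonal n, ∑ A ∈ motzkinPaths p.1, ∑ B ∈ motzkinPaths p.2,
          f (motzkinArch A B) := by
  rw [motzkinPaths_add_two, sum_union, sum_image, sum_image, sum_sigma]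
  · simp_rw [sum_product]
  · rintro ⟨p, A, B⟩ hx ⟨p', A', B'⟩ hx' h
    simp only [coe_sigma, Set.mem_sigma_iff, mem_coe, mem_product, HasAntidiagonal.mem_antidiagonal,
      mem_motzkinPaths] at hx hx'
    obtain ⟨rfl, rfl⟩ := motzkinArch_inj hx.2.1.2 hx'.2.1.2 h
    obtain rfl : p = p' := Prod.ext (hx.2.1.1.symm.trans hx'.2.1.1) (hx.2.2.1.symm.trans hx'.2.2.1)
    rfl
  · simp
  · rw [disjoint_left]
    simp [motzkinArch]

lemma card_filter_motzkinPaths_add_two (P : ℕ → Prop) [DecidablePred P] (n : ℕ) :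
    #{l ∈ motzkinPaths (n + 2) | P (hZeroFrom 0 l)} =
      #{l ∈ motzkinPaths (n + 1) | P (hZeroFrom 0 l + 1)} +
        ∑ p ∈ antidiagonal n,
          #(motzkinPaths p.1) * #{l ∈ motzkinPaths p.2 | P (hZeroFrom 0 l)} := by
  simp only [card_filter, sum_motzkinPaths_add_two, hZeroFrom_zero_cons]
  congr 1
  refine sum_congr rfl fun p _ => ?_
  rw [← smul_eq_mul, ← sum_const]
  refine sum_congr rfl fun A hA => sum_congr rfl fun B _ => ?_
  rw [hZeroFrom_motzkinArch B (mem_motzkinPaths.1 hA).2]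

lemma motzkinNum_add_two (n : ℕ) :
    motzkinNum (n + 2) =
      motzkinNum (n + 1) + ∑ p ∈ antidiagonal n, motzkinNum p.1 * motzkinNum p.2 := by
  simpa [motzkinNum_eq_card] using card_filter_motzkinPaths_add_two (fun _ => True) n

lemma motzkinCount_zero_add_two (n : ℕ) :
    motzkinCount 0 (n + 2) = ∑ p ∈ antidiagonal n, motzkinNum p.1 * motzkinCount 0 p.2 := by
  simpa [motzkinCount_eq_card, motzkinNum_eq_card] using card_filter_motzkinPaths_add_two (· = 0) n

lemma motzkinCount_succ_add_two (r n : ℕ) :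
    motzkinCount (r + 1) (n + 2) =
      motzkinCount r (n + 1) + ∑ p ∈ antidiagonal n, motzkinNum p.1 * motzkinCount (r + 1) p.2 := by
  simpa [motzkinCount_eq_card, motzkinNum_eq_card] using
    card_filter_motzkinPaths_add_two (· = r + 1) n

lemma motzkinNum_zero : motzkinNum 0 = 1 := by
  simp [motzkinNum_eq_card, motzkinPaths_zero]

lemma motzkinNum_one : motzkinNum 1 = 1 := by
  simp [motzkinNum_eq_card, motzkinPaths_one]

lemma motzkinCount_zero_right (r : ℕ) : motzkinCount r 0 = if r = 0 then 1 else 0 := by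
  rw [motzkinCount_eq_card, motzkinPaths_zero, filter_singleton]
  split_ifs <;> simp_all [hZeroFrom, eq_comm]

lemma motzkinCount_one_right (r : ℕ) : motzkinCount r 1 = if r = 1 then 1 else 0 := by
  rw [motzkinCount_eq_card, motzkinPaths_one, filter_singleton]
  split_ifs <;> simp_all [hZeroFrom, eq_comm]

theorem motzkinCount_zero_succ_add : ∀ n, motzkinCount 0 (n + 1) + motzkinCount 0 n = motzkinNum n
  | 0 => by simp [motzkinCount_zero_right, motzkinCount_one_right, motzkinNum_zero]
  | 1 => by simp [motzkinCount_zero_add_two, motzkinCount_zero_right, motzkinCount_one_right,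
      motzkinNum_zero, motzkinNum_one]
  | n + 2 => by
    rw [motzkinCount_zero_add_two (n + 1), Nat.sum_antidiagonal_succ',
      motzkinCount_zero_add_two n, motzkinNum_add_two, motzkinCount_zero_right, if_pos rfl,
      mul_one, add_assoc, ← sum_add_distrib]
    congr 1
    refine sum_congr rfl fun p hp => ?_
    have : p.2 ≤ n := HasAntidiagonal.antidiagonal.snd_le hp -- termination
    rw [← mul_add, motzkinCount_zero_succ_add p.2]

theorem motzkinCount_one_succ_add : ∀ n, motzkinCount 1 (n + 1) + motzkinCount 1 n = motzkinNum n
  | 0 => by simp [motzkinCount_zero_right, motzkinCount_one_right, motzkinNum_zero]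
  | 1 => by simp [motzkinCount_succ_add_two, motzkinCount_zero_right, motzkinCount_one_right,
      motzkinNum_zero, motzkinNum_one]
  | n + 2 => by
    simp only [motzkinCount_succ_add_two 0, zero_add, Nat.sum_antidiagonal_succ',
      motzkinNum_add_two, motzkinCount_zero_right, one_ne_zero, if_false, mul_zero]
    rw [← motzkinCount_zero_succ_add (n + 1)]
    have hsum : ∑ p ∈ antidiagonal n, motzkinNum p.1 * motzkinCount 1 (p.2 + 1) +
        ∑ p ∈ antidiagonal n, motzkinNum p.1 * motzkinCount 1 p.2 =
          ∑ p ∈ antidiagonal n, motzkinNum p.1 * motzkinNum p.2 := by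
      rw [← sum_add_distrib]
      refine sum_congr rfl fun p hp => ?_
      have : p.2 ≤ n := HasAntidiagonal.antidiagonal.snd_le hp -- termination
      rw [← mul_add, motzkinCount_one_succ_add p.2]
    omega

theorem stmt10_general (n : ℕ) :
    (motzkinCount 0 n : ℤ) - (motzkinCount 1 n : ℤ) = (-1) ^ n := by
  induction n with
  | zero => simp [motzkinCount_zero_right]
  | succ n ih =>
    have ha := motzkinCount_zero_succ_add n
    have hb := motzkinCount_one_succ_add n
    rw [pow_succ]
    omega

theorem stmt10 (n : ℕ) (hn : 1 ≤ n) :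
    (motzkinCount 0 n : ℤ) - (motzkinCount 1 n : ℤ) = (-1) ^ n :=
  stmt10_general n
end
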